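/- arXiv:1509.00167 — 6 statements merged into one kernel-verified Lean document; each statement's English description precedes it below -/
import Mathlib

section
/- For integers l ≥ 2 and k ≥ 2, the following identity holds: ∑_{r=2}^{min(k,l)} (r-1) * C(l, r) * C(l(k-1), k-r) = C((k-1)l, k), where C(n,m) denotes the binomial coefficient. -/
/-
With `m = l (k - 1)`, Vandermonde gives `∑ᵣ C(l,r) C(m,k-r) = C(lk,k)`, and absorption
`r C(l,r) = l C(l-1,r-1)` followed by Vandermonde and absorption again gives
`∑ᵣ r C(l,r) C(m,k-r) = l C(lk-1,k-1) = C(lk,k)`. Hence `∑ᵣ (r - 1) C(l,r) C(m,k-r) = 0` over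
`0 ≤ r ≤ k`; the `r = 0` term is `-C(m,k)`, the `r = 1` term vanishes, and the terms with `r > l`
vanish.
-/

open Finset

theorem Nat.sum_range_choose_mul_choose (a b n : ℕ) :
    ∑ r ∈ range (n + 1), a.choose r * b.choose (n - r) = (a + b).choose n := by
  rw [Nat.add_choose_eq, Nat.sum_antidiagonal_eq_sum_range_succ_mk]

theorem Nat.sum_range_mul_choose_mul_choose (a b n : ℕ) :
    ∑ r ∈ range (n + 2), r * a.choose r * b.choose (n + 1 - r) = a * (a + b - 1).choose n := by
  cases a with
  | zero =>
    refine (Finset.sum_eq_zero fun r _ => ?_).trans (zero_mul _).symm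
    rcases r with _ | r <;> simp
  | succ a =>
    rw [Finset.sum_range_succ', zero_mul, zero_mul, add_zero, Nat.add_right_comm,
      Nat.add_sub_cancel, ← Nat.sum_range_choose_mul_choose a b n, Finset.mul_sum]
    refine Finset.sum_congr rfl fun r _ => ?_
    rw [Nat.add_sub_add_right, mul_comm (r + 1), ← Nat.add_one_mul_choose_eq, mul_assoc]

-- The hypergeometric law of drawing `n + 1` out of `l` marked and `l * n` unmarked items has mean 1.
theorem Nat.sum_range_mul_choose_mul_choose_mul_eq_sum (l n : ℕ) :
    ∑ r ∈ range (n + 2), r * l.choose r * (l * n).choose (n + 1 - r)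
      = ∑ r ∈ range (n + 2), l.choose r * (l * n).choose (n + 1 - r) := by
  rw [Nat.sum_range_mul_choose_mul_choose, Nat.sum_range_choose_mul_choose,
    show l + l * n = l * (n + 1) by ring, Nat.choose_mul_right n.add_one_ne_zero,
    Nat.add_sub_cancel]

theorem Nat.sum_Icc_sub_one_mul_choose_mul_choose (l n : ℕ) :
    ∑ r ∈ Icc 2 (n + 1), (r - 1) * l.choose r * (l * n).choose (n + 1 - r)
      = (l * n).choose (n + 1) := by
  have split (f : ℕ → ℕ) : ∑ r ∈ range (n + 2), f r = f 0 + f 1 + ∑ r ∈ Icc 2 (n + 1), f r := by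
    rw [← sum_range_add_sum_Ico _ (by omega : 2 ≤ n + 2), ← Ico_add_one_right_eq_Icc,
      sum_range_succ, sum_range_one]
    rfl
  have shift : ∑ r ∈ Icc 2 (n + 1), (r - 1) * l.choose r * (l * n).choose (n + 1 - r)
      + ∑ r ∈ Icc 2 (n + 1), l.choose r * (l * n).choose (n + 1 - r)
      = ∑ r ∈ Icc 2 (n + 1), r * l.choose r * (l * n).choose (n + 1 - r) := by
    rw [← sum_add_distrib]
    refine sum_congr rfl fun r hr => ?_
    have hr1 : 1 ≤ r := by simp only [mem_Icc] at hr; omega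
    rw [mul_assoc, mul_assoc, ← add_one_mul (r - 1), Nat.sub_add_cancel hr1]
  have mean := Nat.sum_range_mul_choose_mul_choose_mul_eq_sum l n
  rw [split, split] at mean
  simp only [Nat.choose_zero_right, Nat.sub_zero, zero_mul, one_mul, mul_one] at mean
  omega

theorem sum_choose_identity_general (l k : ℕ) (hk : 2 ≤ k) :
    ∑ r ∈ Finset.Icc 2 (min k l),
        (r - 1) * Nat.choose l r * Nat.choose (l * (k - 1)) (k - r)
      = Nat.choose ((k - 1) * l) k := by
  obtain ⟨n, rfl⟩ : ∃ n, k = n + 1 := ⟨k - 1, by omega⟩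
  rw [Nat.add_sub_cancel, mul_comm n l, ← Nat.sum_Icc_sub_one_mul_choose_mul_choose]
  refine sum_subset (Icc_subset_Icc_right (min_le_left _ _)) fun r hr hr' => ?_
  have hlr : l < r := by simp only [mem_Icc] at hr hr'; omega
  rw [Nat.choose_eq_zero_of_lt hlr, mul_zero, zero_mul]

/-- Lemma "sumchoose": for integers `l ≥ 2`, `k ≥ 2`,
`∑_{r=2}^{min(k,l)} (r-1) C(l,r) C(l(k-1), k-r) = C((k-1)l, k)`. -/
theorem sum_choose_identity (l k : ℕ) (hl : 2 ≤ l) (hk : 2 ≤ k) :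
    ∑ r ∈ Finset.Icc 2 (min k l),
        (r - 1) * Nat.choose l r * Nat.choose (l * (k - 1)) (k - r)
      = Nat.choose ((k - 1) * l) k :=
  sum_choose_identity_general l k hk
end

section
/- Let 0 < ε < 1 and let l ≥ 2 be an integer with l·ε < 1. Then ∑_{k=1}^{∞} ((l-1)/k) · ε^k · (1-ε)^{k(l-1)} · C((k-1)l, k-1) = 1 - (1-ε)^{l-1}. Equivalently, the function p_S with p_S(0) = (1-ε)^{l-1}, p_S(1) = (l-1)ε(1-ε)^{l-1}, and p_S(s) = ((l-1)/s) ε^s (1-ε)^{s(l-1)} C((s-1)l, s-1) for s > 1 is a probability mass function on the nonnegative integers. -/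
/-!
Write `t(u) = u (1 - u)^(l - 1)` (this is `fussParam l`) and `B(s) = ∑ₖ C(kl, k) sᵏ` (this is
`fussSeries l`). Since `C(kl, k) t(u)ᵏ` is one term of the binomial expansion of
`(u + (1 - u))^(kl)`, the radius of convergence of `B` is at least `t(1/l)`, the maximum of `t`
on `[0, 1]`. Near `u = 0`, expanding every `(1 - u)^(k(l-1))` and regrouping by total degree gives
`B(t(u)) = ∑ₙ (l u)ⁿ = 1 / (1 - l u)`, because
`∑ₖ (-1)^(n-k) C(n, k) C(kl, n) = [Xⁿ] ((1 + X)^l - 1)ⁿ = lⁿ`. Analytic continuation along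
`[0, 1/l)`, where `t` stays below `t(1/l)`, extends this to all `0 ≤ u < 1/l`.
As `t'(u) = (1 - u)^(l-2) (1 - l u)`, integrating `B(t(u)) t'(u) = (1 - u)^(l-2)` termwise over
`[0, ε]` gives `∑ₖ C(kl, k) t(ε)^(k+1) / (k + 1) = (1 - (1 - ε)^(l-1)) / (l - 1)`.
-/

open Finset Filter Topology MeasureTheory
open scoped NNReal

open Polynomial in
theorem sum_range_neg_one_pow_mul_choose_mul_choose (l n : ℕ) :
    ∑ k ∈ range (n + 1), (-1 : ℤ) ^ (n - k) * n.choose k * (k * l).choose n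
      = (l : ℤ) ^ n := by
  have hfac : (1 + X : ℤ[X]) ^ l - 1 = X * ∑ i ∈ range l, (1 + X) ^ i := by
    rw [← geom_sum_mul, add_sub_cancel_left, mul_comm]
  have key : (((1 + X : ℤ[X]) ^ l - 1) ^ n).coeff n = (l : ℤ) ^ n := by
    rw [hfac, mul_pow, coeff_X_pow_mul', if_pos le_rfl, Nat.sub_self, coeff_zero_eq_eval_zero]
    simp [eval_finsetSum]
  rw [← key, sub_eq_add_neg, add_pow, finsetSum_coeff]
  refine sum_congr rfl fun k _ => ?_
  have hterm : ((1 + X : ℤ[X]) ^ l) ^ k * (-1) ^ (n - k) * (n.choose k : ℤ[X])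
      = C ((-1) ^ (n - k) * (n.choose k : ℤ)) * (1 + X) ^ (k * l) := by
    simp only [C_mul, C_pow, C_neg, C_1, C_eq_natCast, ← pow_mul]
    ring
  rw [hterm, coeff_C_mul, coeff_one_add_X_pow]

theorem sum_range_neg_one_pow_mul_choose_mul_choose_mul_sub_one (l n : ℕ) :
    ∑ k ∈ range (n + 1), (-1 : ℝ) ^ (n - k) * (k * l).choose k * (k * (l - 1)).choose (n - k)
      = (l : ℝ) ^ n := by
  have h := congrArg (Int.cast : ℤ → ℝ) (sum_range_neg_one_pow_mul_choose_mul_choose l n)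
  push_cast at h
  rw [← h]
  refine sum_congr rfl fun k hk => ?_
  rw [mul_assoc, mul_assoc, ← Nat.cast_mul, ← Nat.cast_mul, Nat.mul_sub_one,
    ← Nat.choose_mul (Nat.lt_succ_iff.1 (mem_range.1 hk)), mul_comm (n.choose k)]

theorem choose_mul_pow_mul_pow_le_one {R : Type*} [CommRing R] [LinearOrder R]
    [IsStrictOrderedRing R] (n k : ℕ) {u : R} (h0 : 0 ≤ u) (h1 : u ≤ 1) :
    n.choose k * u ^ k * (1 - u) ^ (n - k) ≤ 1 := by
  rcases le_or_gt k n with hk | hk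
  · calc (n.choose k : R) * u ^ k * (1 - u) ^ (n - k)
          = u ^ k * (1 - u) ^ (n - k) * n.choose k := by ring
        _ ≤ ∑ m ∈ range (n + 1), u ^ m * (1 - u) ^ (n - m) * n.choose m :=
            single_le_sum (f := fun m => u ^ m * (1 - u) ^ (n - m) * n.choose m)
              (fun m _ => by have := sub_nonneg.2 h1; positivity)
              (mem_range.2 (Nat.lt_succ_of_le hk))
        _ = 1 := by rw [← add_pow, add_sub_cancel, one_pow]
  · simp [Nat.choose_eq_zero_of_lt hk]

theorem hasSum_choose_mul_pow {R : Type*} [CommSemiring R] [TopologicalSpace R] (n : ℕ) (x : R) :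
    HasSum (fun j => (n.choose j : R) * x ^ j) ((1 + x) ^ n) := by
  have hsupp : ∀ j ∉ range (n + 1), (n.choose j : R) * x ^ j = 0 := fun j hj => by
    rw [Nat.choose_eq_zero_of_lt (by simpa using hj), Nat.cast_zero, zero_mul]
  have hbinom : (1 + x) ^ n = ∑ j ∈ range (n + 1), (n.choose j : R) * x ^ j := by
    rw [add_comm, add_pow]
    exact sum_congr rfl fun j _ => by ring
  exact hbinom ▸ hasSum_sum_of_ne_finset_zero hsupp

theorem Summable.tsum_prod_eq_tsum_sum_range {E : Type*} [NormedAddCommGroup E]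
    [CompleteSpace E] {a : ℕ × ℕ → E} (h : Summable a) :
    ∑' k, ∑' j, a (k, j) = ∑' n, ∑ k ∈ range (n + 1), a (k, n - k) := by
  let e := HasAntidiagonal.sigmaAntidiagonalEquivProd (A := ℕ)
  have he : Summable fun c => a (e c) := (e.summable_iff).2 h
  rw [← h.tsum_prod, ← e.tsum_eq, he.tsum_sigma]
  congr 1 with n
  rw [← Finset.Nat.sum_antidiagonal_eq_sum_range_succ_mk, ← Finset.tsum_subtype]
  rfl

theorem analyticAt_tsum_mul_pow {𝕜 : Type*} [NontriviallyNormedField 𝕜] [CompleteSpace 𝕜]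
    {c : ℕ → 𝕜} {r : ℝ≥0} {C : ℝ} (hc : ∀ n, ‖c n‖ * (r : ℝ) ^ n ≤ C)
    {x : 𝕜} (hx : ‖x‖ < r) :
    AnalyticAt 𝕜 (fun y => ∑' n, c n * y ^ n) x := by
  let p := FormalMultilinearSeries.ofScalars 𝕜 c
  have hr : (r : ENNReal) ≤ p.radius :=
    p.le_radius_of_bound C fun n => by rw [FormalMultilinearSeries.ofScalars_norm]; exact hc n
  have hx' : x ∈ Metric.eball (0 : 𝕜) p.radius := by
    rw [Metric.mem_eball, edist_zero_right]
    exact lt_of_lt_of_le (by exact_mod_cast hx) hr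
  have := (p.hasFPowerSeriesOnBall (pos_of_gt hx')).analyticAt_of_mem hx'
  have hsum := FormalMultilinearSeries.ofScalarsSum_eq_tsum (E := 𝕜) c
  simp only [smul_eq_mul] at hsum
  exact hsum ▸ this

theorem mul_lt_one_of_lt_inv {α : Type*} [Field α] [LinearOrder α] [IsStrictOrderedRing α]
    {a b : α} (ha : 0 < a) (h : b < a⁻¹) : a * b < 1 :=
  (lt_inv_mul_iff₀ ha).1 (by rwa [mul_one])

theorem inv_natCast_mem_Icc (l : ℕ) : (l : ℝ)⁻¹ ∈ Set.Icc 0 1 :=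
  ⟨inv_nonneg.2 l.cast_nonneg, Nat.cast_inv_le_one l⟩

theorem integral_one_sub_pow (n : ℕ) (x : ℝ) :
    ∫ u in 0..x, (1 - u) ^ n = (1 - (1 - x) ^ (n + 1)) / (n + 1) := by
  rw [intervalIntegral.integral_comp_sub_left (fun u => u ^ n) 1, integral_pow, sub_zero,
    one_pow]

noncomputable def fussParam (l : ℕ) (u : ℝ) : ℝ := u * (1 - u) ^ (l - 1)

noncomputable def fussSeries (l : ℕ) (s : ℝ) : ℝ :=
  ∑' k : ℕ, ((k * l).choose k : ℝ) * s ^ k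

section Fuss

variable {l : ℕ}

theorem fussParam_nonneg {u : ℝ} (h0 : 0 ≤ u) (h1 : u ≤ 1) : 0 ≤ fussParam l u :=
  mul_nonneg h0 (pow_nonneg (sub_nonneg.2 h1) _)

theorem fussParam_le {u : ℝ} (h0 : 0 ≤ u) (h1 : u ≤ 1) : fussParam l u ≤ u :=
  mul_le_of_le_one_right h0 (pow_le_one₀ (sub_nonneg.2 h1) (sub_le_self _ h0))

theorem abs_fussParam_le (u : ℝ) : |fussParam l u| ≤ |u| * (1 + |u|) ^ (l - 1) := by
  rw [fussParam, abs_mul, abs_pow]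
  gcongr
  exact (abs_sub _ _).trans (by rw [abs_one])

theorem hasDerivAt_fussParam (hl : 2 ≤ l) (u : ℝ) :
    HasDerivAt (fussParam l) ((1 - u) ^ (l - 2) * (1 - l * u)) u := by
  obtain ⟨m, rfl⟩ : ∃ m, l = m + 2 := ⟨l - 2, by omega⟩
  have h : HasDerivAt (fun v => v * (1 - v) ^ (m + 1))
      (1 * (1 - u) ^ (m + 1) + u * ((m + 1 : ℕ) * (1 - u) ^ m * -1)) u :=
    (hasDerivAt_id' u).fun_mul (((hasDerivAt_id' u).const_sub 1).pow (m + 1))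
  convert h using 1
  · rfl
  · rw [Nat.add_sub_cancel]
    push_cast
    ring

theorem strictMonoOn_fussParam (hl : 2 ≤ l) :
    StrictMonoOn (fussParam l) (Set.Icc 0 (l : ℝ)⁻¹) := by
  refine strictMonoOn_of_deriv_pos (convex_Icc _ _)
    (fun u _ => (hasDerivAt_fussParam hl u).continuousAt.continuousWithinAt) fun u hu => ?_
  rw [interior_Icc] at hu
  have hl0 : (0 : ℝ) < l := by positivity
  have hu1 : u < 1 := hu.2.trans_le (Nat.cast_inv_le_one l)
  rw [(hasDerivAt_fussParam hl u).deriv]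
  exact mul_pos (pow_pos (sub_pos.2 hu1) _) (sub_pos.2 (mul_lt_one_of_lt_inv hl0 hu.2))

theorem choose_mul_fussParam_pow_le_one (k : ℕ) {u : ℝ} (h0 : 0 ≤ u) (h1 : u ≤ 1) :
    ((k * l).choose k : ℝ) * fussParam l u ^ k ≤ 1 := by
  calc ((k * l).choose k : ℝ) * fussParam l u ^ k
      = (k * l).choose k * u ^ k * (1 - u) ^ (k * l - k) := by
        rw [fussParam, mul_pow, ← pow_mul, ← Nat.mul_sub_one, mul_comm (l - 1), mul_assoc]
    _ ≤ 1 := choose_mul_pow_mul_pow_le_one _ _ h0 h1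

theorem summable_choose_mul_pow {s : ℝ} (h0 : 0 ≤ s) (hs : s < fussParam l (l : ℝ)⁻¹) :
    Summable fun k => ((k * l).choose k : ℝ) * s ^ k := by
  set τ := fussParam l (l : ℝ)⁻¹
  have hτ : 0 < τ := h0.trans_lt hs
  refine Summable.of_nonneg_of_le (fun k => by positivity) (fun k => ?_)
    (summable_geometric_of_lt_one (div_nonneg h0 hτ.le) ((div_lt_one hτ).2 hs))
  calc ((k * l).choose k : ℝ) * s ^ k = ((k * l).choose k * τ ^ k) * (s / τ) ^ k := by
        rw [div_pow]; field_simp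
    _ ≤ (s / τ) ^ k := mul_le_of_le_one_left (by positivity)
        (choose_mul_fussParam_pow_le_one k (inv_natCast_mem_Icc l).1 (inv_natCast_mem_Icc l).2)

theorem analyticAt_fussSeries {s : ℝ} (hs : |s| < fussParam l (l : ℝ)⁻¹) :
    AnalyticAt ℝ (fussSeries l) s := by
  have hτ : 0 ≤ fussParam l (l : ℝ)⁻¹ := (abs_nonneg s).trans hs.le
  refine analyticAt_tsum_mul_pow (r := ⟨_, hτ⟩) (C := 1) (fun k => ?_) hs
  rw [Real.norm_natCast]
  exact choose_mul_fussParam_pow_le_one k (inv_natCast_mem_Icc l).1 (inv_natCast_mem_Icc l).2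

theorem fussSeries_fussParam_of_small {u : ℝ}
    (hu : |u| * (1 + |u|) ^ (l - 1) < fussParam l (l : ℝ)⁻¹) :
    fussSeries l (fussParam l u) = (1 - l * u)⁻¹ := by
  let a (x y : ℝ) (p : ℕ × ℕ) : ℝ :=
    ((p.1 * l).choose p.1 * y ^ p.1) * ((p.1 * (l - 1)).choose p.2 * x ^ p.2)
  have hrow (x y : ℝ) (k : ℕ) :
      HasSum (fun j => a x y (k, j)) ((k * l).choose k * (y * (1 + x) ^ (l - 1)) ^ k) := by
    rw [mul_pow, ← pow_mul, mul_comm (l - 1), ← mul_assoc]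
    exact (hasSum_choose_mul_pow (k * (l - 1)) x).mul_left _
  have hsummable : Summable (a (-u) u) := by
    refine Summable.of_norm ?_
    have hnorm : (fun p => ‖a (-u) u p‖) = a |u| |u| := by
      ext p
      simp only [a, norm_mul, norm_pow, Real.norm_eq_abs, abs_neg, Nat.abs_cast]
    rw [hnorm, summable_prod_of_nonneg (fun p => by positivity)]
    refine ⟨fun k => (hrow _ _ k).summable, ?_⟩
    simp only [fun k => (hrow |u| |u| k).tsum_eq]
    exact summable_choose_mul_pow (by positivity) hu
  have hlu : ‖(l : ℝ) * u‖ < 1 := by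
    have hu' : |u| < (l : ℝ)⁻¹ := calc
      |u| ≤ |u| * (1 + |u|) ^ (l - 1) :=
          le_mul_of_one_le_right (abs_nonneg u) (one_le_pow₀ (by simp))
      _ < _ := hu
      _ ≤ _ := fussParam_le (inv_natCast_mem_Icc l).1 (inv_natCast_mem_Icc l).2
    rcases l.eq_zero_or_pos with rfl | hl
    · simp
    calc ‖(l : ℝ) * u‖ = l * |u| := by rw [norm_mul, Real.norm_natCast, Real.norm_eq_abs]
      _ < l * (l : ℝ)⁻¹ := by gcongr
      _ = 1 := mul_inv_cancel₀ (by positivity)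
  -- Expand each `(1 - u) ^ (k * (l - 1))` and regroup by the total degree in `u`.
  calc fussSeries l (fussParam l u) = ∑' k, ∑' j, a (-u) u (k, j) := by
        simp only [fussSeries, fun k => (hrow (-u) u k).tsum_eq, fussParam, sub_eq_add_neg]
    _ = ∑' n, ∑ k ∈ range (n + 1), a (-u) u (k, n - k) :=
        hsummable.tsum_prod_eq_tsum_sum_range
    _ = ∑' n, ((l : ℝ) * u) ^ n := by
        congr 1 with n
        rw [mul_pow, ← sum_range_neg_one_pow_mul_choose_mul_choose_mul_sub_one l n, sum_mul]
        refine sum_congr rfl fun k hk => ?_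
        obtain ⟨m, rfl⟩ := Nat.exists_eq_add_of_le (Nat.lt_succ_iff.1 (mem_range.1 hk))
        simp only [a, Nat.add_sub_cancel_left, neg_pow u, pow_add]
        ring
    _ = (1 - l * u)⁻¹ := tsum_geometric_of_norm_lt_one hlu

theorem fussSeries_fussParam (hl : 2 ≤ l) {u : ℝ} (h0 : 0 ≤ u) (hu : u < (l : ℝ)⁻¹) :
    fussSeries l (fussParam l u) = (1 - l * u)⁻¹ := by
  set τ := fussParam l (l : ℝ)⁻¹
  have hl0 : (0 : ℝ) < l := by positivity
  have hmem {v : ℝ} (hv0 : 0 ≤ v) (hv : v < (l : ℝ)⁻¹) : v ∈ Set.Icc 0 (l : ℝ)⁻¹ :=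
    ⟨hv0, hv.le⟩
  have hτ : 0 < τ := (zero_mul _ : fussParam l 0 = 0) ▸ strictMonoOn_fussParam hl
    (hmem le_rfl (inv_pos.2 hl0)) (Set.right_mem_Icc.2 (inv_pos.2 hl0).le) (inv_pos.2 hl0)
  have hsmall : ∀ᶠ v in 𝓝 (0 : ℝ), |v| * (1 + |v|) ^ (l - 1) < τ := by
    have hc : Continuous fun v : ℝ => |v| * (1 + |v|) ^ (l - 1) := by fun_prop
    exact hc.continuousAt.eventually_lt continuousAt_const (by simpa using hτ)
  obtain ⟨δ, hδ, hball⟩ := Metric.eventually_nhds_iff.1 hsmall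
  have hU {v : ℝ} (hv : v ∈ Set.Ioo (-δ) (l : ℝ)⁻¹) :
      |fussParam l v| < τ ∧ 1 - l * v ≠ 0 := by
    refine ⟨?_, (sub_pos.2 (mul_lt_one_of_lt_inv hl0 hv.2)).ne'⟩
    rcases lt_or_ge v 0 with hneg | hnonneg
    · refine (abs_fussParam_le v).trans_lt (hball ?_)
      rw [Real.dist_0_eq_abs, abs_of_neg hneg]
      linarith [hv.1]
    · have hv1 : v ≤ 1 := hv.2.le.trans (Nat.cast_inv_le_one l)
      rw [abs_of_nonneg (fussParam_nonneg hnonneg hv1)]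
      exact strictMonoOn_fussParam hl (hmem hnonneg hv.2)
        (Set.right_mem_Icc.2 (inv_pos.2 hl0).le) hv.2
  have hf : AnalyticOnNhd ℝ (fun v => fussSeries l (fussParam l v))
      (Set.Ioo (-δ) (l : ℝ)⁻¹) :=
    fun v hv => (analyticAt_fussSeries (hU hv).1).comp (by unfold fussParam; fun_prop)
  have hg : AnalyticOnNhd ℝ (fun v : ℝ => (1 - l * v)⁻¹) (Set.Ioo (-δ) (l : ℝ)⁻¹) :=
    fun v hv => (by fun_prop : AnalyticAt ℝ (fun v : ℝ => 1 - l * v) v).inv (hU hv).2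
  exact hf.eqOn_of_preconnected_of_eventuallyEq hg isPreconnected_Ioo
    ⟨neg_lt_zero.2 hδ, inv_pos.2 hl0⟩
    (hsmall.mono fun v hv => fussSeries_fussParam_of_small hv) ⟨by linarith, hu⟩

theorem tsum_choose_mul_fussParam_pow_mul (hl : 2 ≤ l) {u : ℝ} (h0 : 0 ≤ u)
    (hu : u < (l : ℝ)⁻¹) :
    ∑' k : ℕ, (k * l).choose k * fussParam l u ^ k * ((1 - u) ^ (l - 2) * (1 - l * u))
      = (1 - u) ^ (l - 2) := by
  have hpos : 0 < 1 - l * u := sub_pos.2 (mul_lt_one_of_lt_inv (by positivity) hu)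
  rw [tsum_mul_right]
  change fussSeries l (fussParam l u) * _ = _
  rw [fussSeries_fussParam hl h0 hu]
  field_simp

theorem integral_choose_mul_fussParam_pow_mul (hl : 2 ≤ l) (k : ℕ) (x : ℝ) :
    ∫ u in 0..x, (k * l).choose k * fussParam l u ^ k * ((1 - u) ^ (l - 2) * (1 - l * u))
      = (k * l).choose k / (k + 1) * fussParam l x ^ (k + 1) := by
  have hderiv (u : ℝ) :
      HasDerivAt (fun v => (k * l).choose k / (k + 1) * fussParam l v ^ (k + 1))
      ((k * l).choose k * fussParam l u ^ k * ((1 - u) ^ (l - 2) * (1 - l * u))) u := by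
    refine (((hasDerivAt_fussParam hl u).fun_pow (k + 1)).const_mul
      (((k * l).choose k : ℝ) / (k + 1))).congr_deriv ?_
    rw [Nat.add_sub_cancel]
    push_cast
    field_simp
  rw [intervalIntegral.integral_eq_sub_of_hasDerivAt (fun u _ => hderiv u)
    ((by unfold fussParam; fun_prop : Continuous _).intervalIntegrable _ _)]
  simp [fussParam]

theorem tsum_choose_div_mul_fussParam_pow (hl : 2 ≤ l) {x : ℝ} (h0 : 0 ≤ x)
    (hx : x < (l : ℝ)⁻¹) :
    ∑' k : ℕ, ((k * l).choose k : ℝ) / (k + 1) * fussParam l x ^ (k + 1)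
      = (1 - (1 - x) ^ (l - 1)) / (l - 1) := by
  let f (k : ℕ) (u : ℝ) : ℝ :=
    (k * l).choose k * fussParam l u ^ k * ((1 - u) ^ (l - 2) * (1 - l * u))
  have hl0 : (0 : ℝ) < l := by positivity
  have hlt {u : ℝ} (hu : u ∈ Set.Ioc 0 x) : u < (l : ℝ)⁻¹ := hu.2.trans_lt hx
  have hle {u : ℝ} (hu : u ∈ Set.Ioc 0 x) : u ≤ 1 := (hlt hu).le.trans (Nat.cast_inv_le_one l)
  have hpos {u : ℝ} (hu : u ∈ Set.Ioc 0 x) : 0 < 1 - l * u :=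
    sub_pos.2 (mul_lt_one_of_lt_inv hl0 (hlt hu))
  have hf_nonneg (k : ℕ) {u : ℝ} (hu : u ∈ Set.Ioc 0 x) : 0 ≤ f k u := by
    have := fussParam_nonneg (l := l) hu.1.le (hle hu)
    have := sub_nonneg.2 (hle hu)
    have := hpos hu
    positivity
  have hf_integral (k : ℕ) :
      ∫ u in Set.Ioc 0 x, f k u = (k * l).choose k / (k + 1) * fussParam l x ^ (k + 1) := by
    rw [← intervalIntegral.integral_of_le h0, integral_choose_mul_fussParam_pow_mul hl]
  have htx0 : 0 ≤ fussParam l x := fussParam_nonneg h0 (hx.le.trans (Nat.cast_inv_le_one l))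
  have htx : fussParam l x < fussParam l (l : ℝ)⁻¹ := strictMonoOn_fussParam hl ⟨h0, hx.le⟩
    (Set.right_mem_Icc.2 (inv_pos.2 hl0).le) hx
  have hsummable : Summable fun k => ∫ u in Set.Ioc 0 x, ‖f k u‖ := by
    have hnorm (k : ℕ) : ∫ u in Set.Ioc 0 x, ‖f k u‖ = ∫ u in Set.Ioc 0 x, f k u :=
      setIntegral_congr_fun measurableSet_Ioc fun u hu => Real.norm_of_nonneg (hf_nonneg k hu)
    simp only [hnorm, hf_integral]
    refine Summable.of_nonneg_of_le (fun k => by positivity) (fun k => ?_)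
      ((summable_choose_mul_pow htx0 htx).mul_right (fussParam l x))
    rw [pow_succ, ← mul_assoc]
    gcongr
    exact div_le_self (by positivity) (by linarith [k.cast_nonneg (α := ℝ)])
  calc _ = ∑' k, ∫ u in Set.Ioc 0 x, f k u := by simp only [hf_integral]
    _ = ∫ u in Set.Ioc 0 x, ∑' k, f k u :=
        integral_tsum_of_summable_integral_norm
          (fun k => (by unfold f fussParam; fun_prop : Continuous (f k)).integrableOn_Ioc)
          hsummable
    _ = ∫ u in Set.Ioc 0 x, (1 - u) ^ (l - 2) :=
        setIntegral_congr_fun measurableSet_Ioc fun u hu =>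
          tsum_choose_mul_fussParam_pow_mul hl hu.1.le (hlt hu)
    _ = _ := by
        rw [← intervalIntegral.integral_of_le h0, integral_one_sub_pow,
          show l - 2 + 1 = l - 1 by omega, Nat.cast_sub hl]
        push_cast
        ring

end Fuss

theorem busy_time_pmf_sums_to_one_general (l : ℕ) (hl : 2 ≤ l) (ε : ℝ)
    (hε0 : 0 < ε) (hcap : (l : ℝ) * ε < 1) :
    ∑' k : ℕ, ((l : ℝ) - 1) / ((k : ℝ) + 1) * ε ^ (k + 1)
        * (1 - ε) ^ ((k + 1) * (l - 1)) * (Nat.choose (k * l) k : ℝ)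
      = 1 - (1 - ε) ^ (l - 1) := by
  have hl1 : (l : ℝ) - 1 ≠ 0 := by
    have : (2 : ℝ) ≤ l := by exact_mod_cast hl
    linarith
  have hε : ε < (l : ℝ)⁻¹ := by
    rwa [lt_inv_comm₀ hε0 (by positivity), inv_eq_one_div, lt_div_iff₀ hε0]
  calc _ = ((l : ℝ) - 1) *
        ∑' k : ℕ, ((k * l).choose k : ℝ) / (k + 1) * fussParam l ε ^ (k + 1) := by
        rw [← tsum_mul_left]
        congr 1 with k
        rw [fussParam, mul_pow, ← pow_mul, mul_comm (l - 1)]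
        ring
    _ = 1 - (1 - ε) ^ (l - 1) := by
        rw [tsum_choose_div_mul_fussParam_pow hl hε0.le hε, mul_div_cancel₀ _ hl1]

/-- Normalization of the busy-time distribution: for `0 < ε < 1`, `l ≥ 2`, `lε < 1`,
`∑_{s=1}^{∞} ((l-1)/s) ε^s (1-ε)^{s(l-1)} C((s-1)l, s-1) = 1 - (1-ε)^{l-1}`
(here the sum is re-indexed via `s = k+1`), i.e. the busy-time pmf sums to one. -/
theorem busy_time_pmf_sums_to_one (l : ℕ) (hl : 2 ≤ l) (ε : ℝ)
    (hε0 : 0 < ε) (hε1 : ε < 1) (hcap : (l : ℝ) * ε < 1) :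
    ∑' k : ℕ, ((l : ℝ) - 1) / ((k : ℝ) + 1) * ε ^ (k + 1)
        * (1 - ε) ^ ((k + 1) * (l - 1)) * (Nat.choose (k * l) k : ℝ)
      = 1 - (1 - ε) ^ (l - 1) :=
  busy_time_pmf_sums_to_one_general l hl ε hε0 hcap
end

section
/- Let 0 < ε < 1 and let l ≥ 2 be an integer with l·ε < 1. Let S be a nonnegative-integer-valued random variable with P(S=0) = (1-ε)^{l-1} and P(S=s) = ((l-1)/s) ε^s (1-ε)^{s(l-1)} C((s-1)l, s-1) for s ≥ 1. Then E(S) = ∑_{s=1}^{∞} s · P(S=s) = (l-1) ε (1-ε)^{l-1} / (1 - lε). -/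
/-!
Write `l = m + 1`. The `k`-th summand is `m ε (1-ε)^m` times `C((m+1)k, k) ε^k (1-ε)^(mk)`, so
the theorem amounts to `ψ 0 = 1 / (1 - (m+1)ε)` for `ψ r = ∑ₖ C((m+1)k + r, k) ε^k (1-ε)^(mk+r)`,
the expected number of visits to level `r` of the walk from `0` with steps `+1` and `-m` of
probabilities `1-ε` and `ε`. Pascal's rule gives `ψ (r+1) = (1-ε) ψ r + ε ψ (r+m+1)`, and two
binomial estimates bound `ψ r` by a multiple of `B^r`, `B = (m+1)(1-ε)/m`. The increments `δ` of
`ψ` then satisfy `δ r = ε/(1-ε) ∑_{i<m} δ (r+1+i)`, whose weights are so small (because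
`(m+1)ε < 1`) that iterating forces `δ = 0`. Hence `ψ` is constant, and `ψ 0 = 1 + (m+1)ε ψ m`
gives its value.
-/

open Finset Filter Topology Real

theorem Nat.pow_mul_choose_add_le (m k r : ℕ) :
    m ^ r * ((m + 1) * k + r).choose k ≤ (m + 1) ^ r * ((m + 1) * k).choose k := by
  induction r with
  | zero => simp
  | succ r ih =>
    set n := (m + 1) * k + r
    have hstep : m * (n + 1).choose k ≤ (m + 1) * n.choose k := by
      have hnk : n + 1 - k = m * k + r + 1 := by simp only [n]; rw [add_mul, one_mul]; omega
      refine Nat.le_of_mul_le_mul_right ?_ (show 0 < n + 1 - k by omega)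
      calc m * (n + 1).choose k * (n + 1 - k) = m * (n + 1) * n.choose k := by
            rw [mul_assoc, ← Nat.choose_mul_succ_eq]; ring
        _ ≤ (m + 1) * (n + 1 - k) * n.choose k := by
            refine Nat.mul_le_mul_right _ ?_
            rw [hnk]; simp only [n]; nlinarith
        _ = (m + 1) * n.choose k * (n + 1 - k) := by ring
    calc m ^ (r + 1) * (n + 1).choose k = m ^ r * (m * (n + 1).choose k) := by ring
      _ ≤ m ^ r * ((m + 1) * n.choose k) := Nat.mul_le_mul_left _ hstep
      _ = (m + 1) * (m ^ r * n.choose k) := by ring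
      _ ≤ (m + 1) * ((m + 1) ^ r * ((m + 1) * k).choose k) := Nat.mul_le_mul_left _ ih
      _ = (m + 1) ^ (r + 1) * ((m + 1) * k).choose k := by ring

theorem Nat.choose_mul_pow_mul_pow_le_add_pow (n k x y : ℕ) :
    n.choose k * x ^ k * y ^ (n - k) ≤ (x + y) ^ n := by
  rcases lt_or_ge n k with hnk | hkn
  · simp [Nat.choose_eq_zero_of_lt hnk]
  rw [add_pow]
  calc n.choose k * x ^ k * y ^ (n - k) = x ^ k * y ^ (n - k) * n.choose k := by ring
    _ ≤ _ := single_le_sum (f := fun i => x ^ i * y ^ (n - i) * n.choose i)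
        (fun _ _ => Nat.zero_le _) (mem_range_succ_iff.mpr hkn)

theorem mul_one_add_div_pow_lt_one {a : ℝ} {m : ℕ} (ha0 : 0 ≤ a) (ha1 : a < 1) (hm : 0 < m) :
    a * (1 + (1 - a) / m) ^ m < 1 := by
  have hpow : (1 + (1 - a) / m) ^ m ≤ exp (1 - a) := by
    calc (1 + (1 - a) / m) ^ m ≤ exp ((1 - a) / m) ^ m := by
          gcongr
          linarith [add_one_le_exp ((1 - a) / m)]
      _ = exp (1 - a) := by rw [← exp_nat_mul]; field_simp
  have hlt : a < exp (a - 1) := by linarith [add_one_lt_exp (sub_ne_zero.mpr ha1.ne)]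
  calc a * (1 + (1 - a) / m) ^ m ≤ a * exp (1 - a) := by gcongr
    _ < exp (a - 1) * exp (1 - a) := by gcongr
    _ = 1 := by rw [← exp_add]; simp

theorem eq_zero_of_eq_mul_sum_of_abs_le_pow {x : ℕ → ℝ} {a B C : ℝ} {m : ℕ} (ha : 0 ≤ a)
    (hB : 0 ≤ B) (hq : a * ∑ i ∈ range m, B ^ (i + 1) < 1)
    (hrec : ∀ r, x r = a * ∑ i ∈ range m, x (r + 1 + i)) (hx : ∀ r, |x r| ≤ C * B ^ r) (r : ℕ) :
    x r = 0 := by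
  set q := a * ∑ i ∈ range m, B ^ (i + 1)
  have hdecay : ∀ N r, |x r| ≤ C * q ^ N * B ^ r := by
    intro N
    induction N with
    | zero => simpa using hx
    | succ N ih =>
      intro r
      calc |x r| = a * |∑ i ∈ range m, x (r + 1 + i)| := by
            rw [hrec, abs_mul, abs_of_nonneg ha]
        _ ≤ a * ∑ i ∈ range m, C * q ^ N * B ^ r * B ^ (i + 1) := by
            gcongr
            refine (abs_sum_le_sum_abs _ _).trans (sum_le_sum fun i _ => (ih _).trans_eq ?_)
            ring
        _ = C * q ^ (N + 1) * B ^ r := by rw [← mul_sum]; ring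
  have hlim : Tendsto (fun N => C * q ^ N * B ^ r) atTop (𝓝 0) := by
    simpa using ((tendsto_pow_atTop_nhds_zero_of_lt_one (by positivity) hq).const_mul C).mul_const
      (B ^ r)
  exact abs_nonpos_iff.mp (ge_of_tendsto' hlim fun N => hdecay N r)

noncomputable def genBinomTerm (m : ℕ) (ε : ℝ) (r k : ℕ) : ℝ :=
  ((m + 1) * k + r).choose k * ε ^ k * (1 - ε) ^ (m * k + r)

noncomputable def genBinomSeries (m : ℕ) (ε : ℝ) (r : ℕ) : ℝ :=
  ∑' k, genBinomTerm m ε r k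

noncomputable def genBinomGrowth (m : ℕ) (ε : ℝ) : ℝ :=
  (m + 1) * (1 - ε) / m

noncomputable def genBinomRatio (m : ℕ) (ε : ℝ) : ℝ :=
  (m + 1) * ε * genBinomGrowth m ε ^ m

section

variable {m : ℕ} {ε : ℝ}

theorem lt_one_of_succ_mul_lt_one (hε0 : 0 ≤ ε) (hε : (m + 1) * ε < 1) : ε < 1 := by
  nlinarith [m.cast_nonneg (α := ℝ)]

theorem genBinomGrowth_eq (hm : 0 < m) : genBinomGrowth m ε = 1 + (1 - (m + 1) * ε) / m := by
  unfold genBinomGrowth; field_simp; ring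

theorem one_le_genBinomGrowth (hm : 0 < m) (hε : (m + 1) * ε < 1) : 1 ≤ genBinomGrowth m ε := by
  rw [genBinomGrowth_eq hm, le_add_iff_nonneg_right]
  exact div_nonneg (by linarith) m.cast_nonneg

theorem genBinomRatio_nonneg (hm : 0 < m) (hε0 : 0 ≤ ε) (hε : (m + 1) * ε < 1) :
    0 ≤ genBinomRatio m ε := by
  have := one_le_genBinomGrowth hm hε
  unfold genBinomRatio; positivity

theorem genBinomRatio_lt_one (hm : 0 < m) (hε0 : 0 ≤ ε) (hε : (m + 1) * ε < 1) :
    genBinomRatio m ε < 1 := by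
  rw [genBinomRatio, genBinomGrowth_eq hm]
  exact mul_one_add_div_pow_lt_one (by positivity) hε hm

theorem genBinomTerm_nonneg (hε0 : 0 ≤ ε) (hε1 : ε ≤ 1) (r k : ℕ) : 0 ≤ genBinomTerm m ε r k := by
  have : 0 ≤ 1 - ε := by linarith
  unfold genBinomTerm; positivity

theorem genBinomTerm_le (hm : 0 < m) (hε0 : 0 ≤ ε) (hε1 : ε ≤ 1) (r k : ℕ) :
    genBinomTerm m ε r k ≤ genBinomGrowth m ε ^ r * genBinomRatio m ε ^ k := by
  have hshift : (m : ℝ) ^ r * ((m + 1) * k + r).choose k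
      ≤ (m + 1) ^ r * ((m + 1) * k).choose k := by
    exact_mod_cast Nat.pow_mul_choose_add_le m k r
  have hcentral : (((m + 1) * k).choose k : ℝ) * m ^ (m * k) ≤ (m + 1) ^ ((m + 1) * k) := by
    have h := Nat.choose_mul_pow_mul_pow_le_add_pow ((m + 1) * k) k 1 m
    rw [show (m + 1) * k - k = m * k by rw [add_one_mul, Nat.add_sub_cancel], one_pow, mul_one,
      add_comm 1 m] at h
    exact_mod_cast h
  have hm' : (0 : ℝ) < m := by exact_mod_cast hm
  have h1ε : 0 ≤ 1 - ε := by linarith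
  have hrhs : genBinomGrowth m ε ^ r * genBinomRatio m ε ^ k
      = (m + 1) ^ r * (m + 1) ^ ((m + 1) * k) * (ε ^ k * (1 - ε) ^ (m * k + r))
        / (m ^ r * m ^ (m * k)) := by
    simp only [genBinomRatio, genBinomGrowth, div_pow, mul_pow, ← pow_mul]
    field_simp
    ring
  rw [hrhs, le_div_iff₀ (by positivity)]
  set t := ε ^ k * (1 - ε) ^ (m * k + r)
  calc genBinomTerm m ε r k * (m ^ r * m ^ (m * k))
      = (m ^ r * ((m + 1) * k + r).choose k) * m ^ (m * k) * t := by unfold genBinomTerm; ring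
    _ ≤ ((m + 1) ^ r * ((m + 1) * k).choose k) * m ^ (m * k) * t := by gcongr
    _ = (m + 1) ^ r * ((((m + 1) * k).choose k : ℝ) * m ^ (m * k)) * t := by ring
    _ ≤ (m + 1) ^ r * (m + 1) ^ ((m + 1) * k) * t := by gcongr

theorem genBinomTerm_succ_succ (r k : ℕ) :
    genBinomTerm m ε (r + 1) (k + 1)
      = (1 - ε) * genBinomTerm m ε r (k + 1) + ε * genBinomTerm m ε (r + (m + 1)) k := by
  unfold genBinomTerm
  rw [show (m + 1) * (k + 1) + (r + 1) = (m + 1) * (k + 1) + r + 1 by ring, Nat.choose_succ_succ',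
    show (m + 1) * k + (r + (m + 1)) = (m + 1) * (k + 1) + r by ring,
    show m * k + (r + (m + 1)) = m * (k + 1) + (r + 1) by ring]
  push_cast
  ring

theorem genBinomTerm_succ_zero (r : ℕ) :
    genBinomTerm m ε (r + 1) 0 = (1 - ε) * genBinomTerm m ε r 0 := by
  simp [genBinomTerm, pow_succ, mul_comm]

theorem genBinomTerm_zero_succ (k : ℕ) :
    genBinomTerm m ε 0 (k + 1) = (m + 1) * ε * genBinomTerm m ε m k := by
  have hchoose : ((m + 1) * (k + 1)).choose (k + 1) = (m + 1) * ((m + 1) * k + m).choose k := by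
    refine Nat.eq_of_mul_eq_mul_right (show 0 < k + 1 by omega) ?_
    rw [show (m + 1) * (k + 1) = (m + 1) * k + m + 1 by ring, ← Nat.add_one_mul_choose_eq]
    ring
  unfold genBinomTerm
  rw [add_zero, add_zero, hchoose]
  push_cast
  ring

theorem summable_genBinomTerm (hm : 0 < m) (hε0 : 0 ≤ ε) (hε : (m + 1) * ε < 1) (r : ℕ) :
    Summable (genBinomTerm m ε r) :=
  have hε1 := (lt_one_of_succ_mul_lt_one hε0 hε).le
  .of_nonneg_of_le (genBinomTerm_nonneg hε0 hε1 r) (genBinomTerm_le hm hε0 hε1 r)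
    ((summable_geometric_of_lt_one (genBinomRatio_nonneg hm hε0 hε)
      (genBinomRatio_lt_one hm hε0 hε)).mul_left _)

theorem genBinomSeries_nonneg (hε0 : 0 ≤ ε) (hε1 : ε ≤ 1) (r : ℕ) : 0 ≤ genBinomSeries m ε r :=
  tsum_nonneg (genBinomTerm_nonneg hε0 hε1 r)

theorem genBinomSeries_le (hm : 0 < m) (hε0 : 0 ≤ ε) (hε : (m + 1) * ε < 1) (r : ℕ) :
    genBinomSeries m ε r ≤ genBinomGrowth m ε ^ r / (1 - genBinomRatio m ε) := by
  have hgeom := hasSum_geometric_of_lt_one (genBinomRatio_nonneg hm hε0 hε)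
    (genBinomRatio_lt_one hm hε0 hε)
  rw [div_eq_mul_inv]
  exact hasSum_le (genBinomTerm_le hm hε0 (lt_one_of_succ_mul_lt_one hε0 hε).le r)
    (summable_genBinomTerm hm hε0 hε r).hasSum (hgeom.mul_left _)

theorem genBinomSeries_succ (hm : 0 < m) (hε0 : 0 ≤ ε) (hε : (m + 1) * ε < 1) (r : ℕ) :
    genBinomSeries m ε (r + 1)
      = (1 - ε) * genBinomSeries m ε r + ε * genBinomSeries m ε (r + (m + 1)) := by
  have hs := summable_genBinomTerm hm hε0 hε
  unfold genBinomSeries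
  rw [(hs (r + 1)).tsum_eq_zero_add, (hs r).tsum_eq_zero_add, genBinomTerm_succ_zero,
    tsum_congr (genBinomTerm_succ_succ r),
    ((summable_nat_add_iff 1).mpr (hs r) |>.mul_left _).tsum_add ((hs _).mul_left _),
    tsum_mul_left, tsum_mul_left]
  ring

theorem genBinomSeries_zero (hm : 0 < m) (hε0 : 0 ≤ ε) (hε : (m + 1) * ε < 1) :
    genBinomSeries m ε 0 = 1 + (m + 1) * ε * genBinomSeries m ε m := by
  unfold genBinomSeries
  rw [(summable_genBinomTerm hm hε0 hε 0).tsum_eq_zero_add, tsum_congr genBinomTerm_zero_succ,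
    tsum_mul_left]
  simp [genBinomTerm]

theorem genBinomSeries_succ_eq (hm : 0 < m) (hε0 : 0 ≤ ε) (hε : (m + 1) * ε < 1) (r : ℕ) :
    genBinomSeries m ε (r + 1) = genBinomSeries m ε r := by
  have hε1 := lt_one_of_succ_mul_lt_one hε0 hε
  have hB1 := one_le_genBinomGrowth hm hε
  have hsucc := genBinomSeries_succ hm hε0 hε
  set B := genBinomGrowth m ε
  set ψ := genBinomSeries m ε
  have hrec : ∀ n, ψ (n + 1) - ψ n
      = ε / (1 - ε) * ∑ i ∈ range m, (ψ (n + 1 + i + 1) - ψ (n + 1 + i)) := by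
    intro n
    rw [show ∑ i ∈ range m, (ψ (n + 1 + i + 1) - ψ (n + 1 + i)) = ψ (n + 1 + m) - ψ (n + 1 + 0)
      from sum_range_sub (fun i => ψ (n + 1 + i)) m, show n + 1 + m = n + (m + 1) by ring,
      add_zero, hsucc]
    field_simp [(sub_pos.mpr hε1).ne']
    ring
  have hq : ε / (1 - ε) * ∑ i ∈ range m, B ^ (i + 1) < 1 :=
    calc ε / (1 - ε) * ∑ i ∈ range m, B ^ (i + 1) ≤ ε / (1 - ε) * (m * B ^ m) := by
          gcongr
          refine (sum_le_sum fun i hi => pow_le_pow_right₀ hB1 (mem_range.mp hi)).trans_eq ?_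
          simp
      _ = ε * B ^ m * (m / (1 - ε)) := by ring
      _ ≤ ε * B ^ m * (m + 1) := by
          gcongr
          rw [div_le_iff₀ (by linarith)]
          linarith
      _ = genBinomRatio m ε := by unfold genBinomRatio; ring
      _ < 1 := genBinomRatio_lt_one hm hε0 hε
  have hx : ∀ n, |ψ (n + 1) - ψ n| ≤ (B + 1) / (1 - genBinomRatio m ε) * B ^ n := by
    intro n
    have hψ0 := genBinomSeries_nonneg hε0 hε1.le (m := m)
    calc |ψ (n + 1) - ψ n| ≤ ψ (n + 1) + ψ n := by
          rw [abs_sub_le_iff]; constructor <;> linarith [hψ0 n, hψ0 (n + 1)]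
      _ ≤ B ^ (n + 1) / (1 - genBinomRatio m ε) + B ^ n / (1 - genBinomRatio m ε) :=
          add_le_add (genBinomSeries_le hm hε0 hε _) (genBinomSeries_le hm hε0 hε _)
      _ = (B + 1) / (1 - genBinomRatio m ε) * B ^ n := by ring
  exact sub_eq_zero.mp (eq_zero_of_eq_mul_sum_of_abs_le_pow (div_nonneg hε0 (by linarith))
    (by linarith) hq hrec hx r)

theorem genBinomSeries_eq (hm : 0 < m) (hε0 : 0 ≤ ε) (hε : (m + 1) * ε < 1) (r : ℕ) :
    genBinomSeries m ε r = (1 - (m + 1) * ε)⁻¹ := by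
  have hconst : ∀ n, genBinomSeries m ε n = genBinomSeries m ε 0 := by
    intro n
    induction n with
    | zero => rfl
    | succ n ih => rw [genBinomSeries_succ_eq hm hε0 hε, ih]
  have h0 := genBinomSeries_zero hm hε0 hε
  rw [hconst m] at h0
  rw [hconst r]
  exact eq_inv_of_mul_eq_one_left (by linear_combination h0)

end

theorem busy_time_mean_general (l : ℕ) (hl : 2 ≤ l) (ε : ℝ)
    (hε0 : 0 < ε) (hcap : (l : ℝ) * ε < 1) :
    ∑' k : ℕ, ((k : ℝ) + 1) *
        (((l : ℝ) - 1) / ((k : ℝ) + 1) * ε ^ (k + 1)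
          * (1 - ε) ^ ((k + 1) * (l - 1)) * (Nat.choose (k * l) k : ℝ))
      = ((l : ℝ) - 1) * ε * (1 - ε) ^ (l - 1) / (1 - (l : ℝ) * ε) := by
  obtain ⟨m, rfl⟩ : ∃ m, l = m + 1 := ⟨l - 1, by omega⟩
  push_cast at hcap ⊢
  simp only [add_sub_cancel_right]
  have hterm : ∀ k : ℕ, ((k : ℝ) + 1) * ((m : ℝ) / ((k : ℝ) + 1) * ε ^ (k + 1)
      * (1 - ε) ^ ((k + 1) * m) * (Nat.choose (k * (m + 1)) k : ℝ))
      = m * ε * (1 - ε) ^ m * genBinomTerm m ε 0 k := by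
    intro k
    unfold genBinomTerm
    rw [mul_comm k, add_zero, add_zero]
    field_simp
    ring
  calc _ = ∑' k : ℕ, m * ε * (1 - ε) ^ m * genBinomTerm m ε 0 k := tsum_congr hterm
    _ = m * ε * (1 - ε) ^ m * genBinomSeries m ε 0 := tsum_mul_left
    _ = _ := by rw [genBinomSeries_eq (by omega) hε0.le hcap, div_eq_mul_inv]

/-- Mean busy time: for `0 < ε < 1`, `l ≥ 2`, `lε < 1`, with busy-time pmf
`P(S=s) = ((l-1)/s) ε^s (1-ε)^{s(l-1)} C((s-1)l, s-1)` for `s ≥ 1`,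
`E(S) = ∑_{s≥1} s·P(S=s) = (l-1)ε(1-ε)^{l-1}/(1-lε)` (sum re-indexed via `s = k+1`). -/
theorem busy_time_mean (l : ℕ) (hl : 2 ≤ l) (ε : ℝ)
    (hε0 : 0 < ε) (hε1 : ε < 1) (hcap : (l : ℝ) * ε < 1) :
    ∑' k : ℕ, ((k : ℝ) + 1) *
        (((l : ℝ) - 1) / ((k : ℝ) + 1) * ε ^ (k + 1)
          * (1 - ε) ^ ((k + 1) * (l - 1)) * (Nat.choose (k * l) k : ℝ))
      = ((l : ℝ) - 1) * ε * (1 - ε) ^ (l - 1) / (1 - (l : ℝ) * ε) :=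
  busy_time_mean_general l hl ε hε0 hcap
end

section
/- Let 0 < ε < 1 and let l ≥ 2 be an integer with l·ε < 1. Let S have the busy-time distribution P(S=0) = (1-ε)^{l-1}, P(S=1) = (l-1)ε(1-ε)^{l-1}, P(S=s) = ((l-1)/s) ε^s (1-ε)^{s(l-1)} C((s-1)l, s-1) for s > 1, and let S⁺ = max(S,1), i.e. S⁺ = S if S ≥ 1 and S⁺ = 1 if S = 0. Then E(S⁺) = (1-ε)^l / (1-lε). -/
open Finset

namespace BusyAux

/-- `v l r k` = coefficient of `t^k` in `B(t)^r` where `B = 1 + t B^l`: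
explicitly `(r/(lk+r)) C(lk+r, k)`, written subtraction-style. -/
noncomputable def v (l r : ℕ) : ℕ → ℝ
  | 0 => 1
  | (m+1) => (((l*(m+1)+r).choose (m+1) : ℕ) : ℝ)
      - l * (((l*(m+1)+r-1).choose m : ℕ) : ℝ)

lemma v_zero (l r : ℕ) : v l r 0 = 1 := rfl

lemma v_succ_mul (l r m : ℕ) (hl : 1 ≤ l) :
    ((l*(m+1)+r : ℕ) : ℝ) * v l r (m+1) = r * (((l*(m+1)+r).choose (m+1) : ℕ) : ℝ) := by
  have h1 : 1*(m+1) ≤ l*(m+1) := Nat.mul_le_mul_right _ hl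
  obtain ⟨N, hN⟩ : ∃ N, l*(m+1)+r = N+1 := ⟨l*(m+1)+r-1, by omega⟩
  have key := Nat.add_one_mul_choose_eq N m
  have keyR : ((N+1 : ℕ) : ℝ) * (N.choose m : ℕ) = ((N+1).choose (m+1) : ℕ) * ((m+1 : ℕ) : ℝ) := by
    exact_mod_cast key
  have hcast : (l : ℝ)*(m+1)+r = (N : ℝ)+1 := by exact_mod_cast congrArg (Nat.cast (R := ℝ)) hN
  show ((l*(m+1)+r : ℕ) : ℝ) *
      ((((l*(m+1)+r).choose (m+1) : ℕ) : ℝ) - l * (((l*(m+1)+r-1).choose m : ℕ) : ℝ)) = _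
  rw [hN]
  have h2 : N + 1 - 1 = N := rfl
  rw [h2]
  push_cast
  push_cast at keyR hcast
  nlinarith [keyR, hcast]

lemma v_nonneg (l r : ℕ) (hl : 1 ≤ l) : ∀ k, 0 ≤ v l r k
  | 0 => by rw [v_zero]; norm_num
  | (m+1) => by
    have h := v_succ_mul l r m hl
    have h1 : 1*(m+1) ≤ l*(m+1) := Nat.mul_le_mul_right _ hl
    have hN : (0 : ℝ) < ((l*(m+1)+r : ℕ) : ℝ) := by
      have : 1 ≤ l*(m+1)+r := by omega
      exact_mod_cast Nat.lt_of_lt_of_le Nat.zero_lt_one this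
    have hr : (0:ℝ) ≤ (r:ℝ) := by positivity
    have hc : (0:ℝ) ≤ (((l*(m+1)+r).choose (m+1) : ℕ) : ℝ) := by positivity
    nlinarith [h, hN, hr, hc]

lemma v_zero_r (l m : ℕ) (hl : 1 ≤ l) : v l 0 (m+1) = 0 := by
  have h := v_succ_mul l 0 m hl
  have h1 : 1*(m+1) ≤ l*(m+1) := Nat.mul_le_mul_right _ hl
  have hN : (0 : ℝ) < ((l*(m+1)+0 : ℕ) : ℝ) := by
    have : 1 ≤ l*(m+1)+0 := by omega
    exact_mod_cast Nat.lt_of_lt_of_le Nat.zero_lt_one this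
  have : ((l*(m+1)+0 : ℕ) : ℝ) * v l 0 (m+1) = 0 := by rw [h]; norm_num
  exact (mul_eq_zero.mp this).resolve_left (ne_of_gt hN)

lemma v_rec (l r k : ℕ) (hl : 1 ≤ l) :
    v l (r+1) (k+1) = v l r (k+1) + v l (r+l) k := by
  cases k with
  | zero =>
    show (((l*1+(r+1)).choose 1 : ℕ) : ℝ) - l * (((l*1+(r+1)-1).choose 0 : ℕ) : ℝ)
        = ((((l*1+r).choose 1 : ℕ) : ℝ) - l * (((l*1+r-1).choose 0 : ℕ) : ℝ)) + v l (r+l) 0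
    rw [v_zero]
    have e1 : l*1+(r+1) = l+r+1 := by omega
    have e2 : l*1+(r+1)-1 = l+r := by omega
    have e3 : l*1+r = l+r := by omega
    have e4 : l*1+r-1 = l+r-1 := by omega
    rw [e2, e1, e3]
    simp [Nat.choose_one_right]
    push_cast
    ring
  | succ m =>
    -- k = m+1, sum index k+1 = m+2
    have hL : l*(m+2) = l*(m+1) + l := by ring
    have hL2 : l*(m+1) = l*m + l := by ring
    have hA : 1 ≤ l*(m+2)+r := by omega
    obtain ⟨A, hA'⟩ : ∃ A, l*(m+2)+r = A+1 := ⟨l*(m+2)+r-1, by omega⟩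
    -- goal in terms of choose
    show (((l*(m+2)+(r+1)).choose (m+2) : ℕ) : ℝ) - l * (((l*(m+2)+(r+1)-1).choose (m+1) : ℕ) : ℝ)
        = ((((l*(m+2)+r).choose (m+2) : ℕ) : ℝ) - l * (((l*(m+2)+r-1).choose (m+1) : ℕ) : ℝ))
          + ((((l*(m+1)+(r+l)).choose (m+1) : ℕ) : ℝ) - l * (((l*(m+1)+(r+l)-1).choose m : ℕ) : ℝ))
    have e1 : l*(m+2)+(r+1) = (A+1)+1 := by omega
    have e2 : l*(m+2)+(r+1)-1 = A+1 := by omega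
    have e3 : l*(m+2)+r = A+1 := hA'
    have e4 : l*(m+2)+r-1 = A := by omega
    have e5 : l*(m+1)+(r+l) = A+1 := by omega
    have e6 : l*(m+1)+(r+l)-1 = A := by omega
    rw [e2, e1, e4, e3, e6, e5]
    have p1 : ((A+1+1).choose (m+2) : ℕ) = (A+1).choose (m+1) + (A+1).choose (m+2) :=
      Nat.choose_succ_succ' (A+1) (m+1)
    have p2 : ((A+1).choose (m+1) : ℕ) = A.choose m + A.choose (m+1) :=
      Nat.choose_succ_succ' A m
    have p1R : (((A+1+1).choose (m+2) : ℕ) : ℝ)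
        = ((A+1).choose (m+1) : ℕ) + (((A+1).choose (m+2) : ℕ) : ℝ) := by exact_mod_cast p1
    have p2R : (((A+1).choose (m+1) : ℕ) : ℝ)
        = (A.choose m : ℕ) + ((A.choose (m+1) : ℕ) : ℝ) := by exact_mod_cast p2
    rw [p1R]
    nlinarith [p2R]

lemma v_one_succ (l k : ℕ) (hl : 1 ≤ l) : v l 1 (k+1) = v l l k := by
  have := v_rec l 0 k hl
  rw [v_zero_r l k hl] at this
  simpa using this

/-- The convolution (Rothe–Hagen) identity. -/
lemma v_conv (l : ℕ) (hl : 1 ≤ l) :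
    ∀ k r s, (∑ p ∈ antidiagonal k, v l r p.1 * v l s p.2) = v l (r+s) k := by
  intro k
  induction k with
  | zero => intro r s; simp [v_zero]
  | succ n ih =>
    -- first: the s-difference step, then induction on s with base s = 0.
    intro r s
    induction s with
    | zero =>
      -- only p = (n+1, 0) survives
      rw [Finset.sum_eq_single (n+1, 0)]
      · simp [v_zero]
      · rintro ⟨i, j⟩ hp hne
        rw [HasAntidiagonal.mem_antidiagonal] at hp
        have hj : j ≠ 0 := by
          rintro rfl
          exact hne (by simp at hp ⊢; omega)
        obtain ⟨m, rfl⟩ : ∃ m, j = m+1 := ⟨j-1, by omega⟩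
        rw [v_zero_r l m hl]
        ring
      · intro h
        exact absurd (HasAntidiagonal.mem_antidiagonal.mpr (by simp)) h
    | succ s ihs =>
      have hdiff : (∑ p ∈ antidiagonal (n+1), v l r p.1 * v l (s+1) p.2)
          = (∑ p ∈ antidiagonal (n+1), v l r p.1 * v l s p.2)
            + ∑ p ∈ antidiagonal n, v l r p.1 * v l (s+l) p.2 := by
        rw [Finset.Nat.sum_antidiagonal_succ' (f := fun p => v l r p.1 * v l (s+1) p.2),
            Finset.Nat.sum_antidiagonal_succ' (f := fun p => v l r p.1 * v l s p.2)]
        have : ∀ p ∈ antidiagonal n, v l r p.1 * v l (s+1) (p.2+1)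
            = v l r p.1 * v l s (p.2+1) + v l r p.1 * v l (s+l) p.2 := by
          intro p _
          rw [v_rec l s p.2 hl]
          ring
        rw [Finset.sum_congr rfl this, Finset.sum_add_distrib]
        rw [v_zero, v_zero]
        ring
      rw [hdiff, ihs, ih r (s+l), ← Nat.add_assoc]
      rw [show r + s + l = (r+s) + l from rfl]
      rw [← v_rec l (r+s) n hl]
      rfl


lemma choose_id (l : ℕ) (hl : 1 ≤ l) :
    ∀ k, (((l*k).choose k : ℕ) : ℝ) = (((l:ℝ)-1)*k + 1) * v l 1 k
  | 0 => by simp [v_zero]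
  | (m+1) => by
    have hmain := v_succ_mul l 1 m hl
    have hN : 1 ≤ l*(m+1)+1 := by omega
    have hNpos : (0:ℝ) < ((l*(m+1)+1 : ℕ) : ℝ) := by positivity
    -- Nat: C(l(m+1), m+1) * (l(m+1)+1) = C(l(m+1)+1, m+1) * (l(m+1)+1-(m+1))
    have hnat := Nat.choose_mul_succ_eq (l*(m+1)) (m+1)
    have hsub : l*(m+1) + 1 - (m+1) = (l-1)*(m+1)+1 := by
      have h1 : 1*(m+1) ≤ l*(m+1) := Nat.mul_le_mul_right _ hl
      have h2 : (l-1)*(m+1) + 1*(m+1) = l*(m+1) := by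
        rw [← Nat.add_mul]
        congr 1
        omega
      omega
    rw [hsub] at hnat
    have hnatR : (((l*(m+1)).choose (m+1) : ℕ) : ℝ) * ((l*(m+1)+1 : ℕ) : ℝ)
        = (((l*(m+1)+1).choose (m+1) : ℕ) : ℝ) * (((l-1)*(m+1)+1 : ℕ) : ℝ) := by
      exact_mod_cast hnat
    have hcast : (((l-1)*(m+1)+1 : ℕ) : ℝ) = ((l:ℝ)-1)*((m+1 : ℕ) : ℝ) + 1 := by
      have : ((l-1 : ℕ) : ℝ) = (l:ℝ) - 1 := by
        have : (1:ℕ) ≤ l := hl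
        push_cast [Nat.cast_sub this]
        ring
      push_cast [this]
      ring
    -- combine: C(l(m+1),m+1) = ((l-1)(m+1)+1) * v
    have hv : ((l*(m+1)+1 : ℕ) : ℝ) * v l 1 (m+1)
        = (((l*(m+1)+1).choose (m+1) : ℕ) : ℝ) := by
      have := hmain
      push_cast at this ⊢
      linarith [this]
    have goal' : (((l*(m+1)).choose (m+1) : ℕ) : ℝ) * ((l*(m+1)+1 : ℕ) : ℝ)
        = ((((l:ℝ)-1)*((m+1 : ℕ) : ℝ) + 1) * v l 1 (m+1)) * ((l*(m+1)+1 : ℕ) : ℝ) := by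
      rw [hnatR, ← hv, hcast]
      ring
    have := mul_right_cancel₀ (ne_of_gt hNpos) goal'
    push_cast at this ⊢
    linarith [this]

lemma sum_conv_le (f g : ℕ → ℝ) (hf : ∀ i, 0 ≤ f i) (hg : ∀ j, 0 ≤ g j) (N : ℕ) :
    ∑ k ∈ range N, ∑ p ∈ antidiagonal k, f p.1 * g p.2
      ≤ (∑ i ∈ range N, f i) * (∑ j ∈ range N, g j) := by
  have hdisj : (↑(range N) : Set ℕ).PairwiseDisjoint (fun k => antidiagonal k) := by
    intro x _ y _ hxy
    simp only [Function.onFun, Finset.disjoint_left]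
    intro p hpx hpy
    rw [HasAntidiagonal.mem_antidiagonal] at hpx hpy
    exact hxy (hpx ▸ hpy)
  rw [← Finset.sum_biUnion hdisj, Finset.sum_mul_sum, ← Finset.sum_product']
  apply Finset.sum_le_sum_of_subset_of_nonneg
  · intro p hp
    simp only [Finset.mem_biUnion, mem_range, HasAntidiagonal.mem_antidiagonal] at hp
    obtain ⟨k, hk, hpk⟩ := hp
    simp only [Finset.mem_product, mem_range]
    omega
  · intro p _ _
    exact mul_nonneg (hf _) (hg _)


theorem key (l : ℕ) (hl : 2 ≤ l) (ε : ℝ) (hε0 : 0 < ε) (hε1 : ε < 1)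
    (hcap : (l : ℝ) * ε < 1) :
    Summable (fun k : ℕ => ((l*k).choose k : ℝ) * (ε*(1-ε)^(l-1))^k) ∧
    ∑' k : ℕ, ((l*k).choose k : ℝ) * (ε*(1-ε)^(l-1))^k = 1/(1-(l:ℝ)*ε) := by
  have hl1 : 1 ≤ l := by omega
  have h1ε : 0 < 1 - ε := by linarith
  set tt : ℝ := ε*(1-ε)^(l-1) with htt_def
  have htt : 0 < tt := by positivity
  set x₀ : ℝ := (1-ε)⁻¹ with hx₀_def
  have hx₀ : 0 < x₀ := by positivity
  have hxmul : (1-ε) * x₀ = 1 := mul_inv_cancel₀ (ne_of_gt h1ε)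
  have hxpow : (1-ε)^(l-1) * x₀^(l-1) = 1 := by rw [← mul_pow, hxmul, one_pow]
  have halg2 : tt * x₀^(l-1) = ε := by
    rw [htt_def, mul_assoc, hxpow, mul_one]
  have hl' : l - 1 + 1 = l := by omega
  have hxl : x₀^l = x₀^(l-1) * x₀ := by rw [← pow_succ, hl']
  have halg1 : 1 + tt*x₀^l = x₀ := by
    rw [hxl, ← mul_assoc, halg2]
    nlinarith [hxmul]
  have hlε0 : 0 < 1 - (l:ℝ)*ε := by linarith
  have halg3 : tt * ((l:ℝ) * x₀^(l-1)) = (l:ℝ)*ε := by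
    rw [mul_comm ((l:ℝ)) (x₀^(l-1)), ← mul_assoc, halg2]
    ring
  have halg4 : tt * x₀^l = ε * x₀ := by rw [hxl, ← mul_assoc, halg2]
  -- the coefficient sequences
  set a : ℕ → ℕ → ℝ := fun r k => v l r k * tt^k with ha_def
  set wa : ℕ → ℕ → ℝ := fun r k => (k:ℝ) * v l r k * tt^k with hwa_def
  have ha0 : ∀ r k, 0 ≤ a r k := fun r k => mul_nonneg (v_nonneg l r hl1 k) (by positivity)
  have hwa0 : ∀ r k, 0 ≤ wa r k := fun r k =>
    mul_nonneg (mul_nonneg (by positivity) (v_nonneg l r hl1 k)) (by positivity)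
  have haconv : ∀ r s k, (∑ p ∈ antidiagonal k, a r p.1 * a s p.2) = a (r+s) k := by
    intro r s k
    have h1 : ∀ p ∈ antidiagonal k, a r p.1 * a s p.2
        = (v l r p.1 * v l s p.2) * tt^k := by
      intro p hp
      rw [HasAntidiagonal.mem_antidiagonal] at hp
      simp only [ha_def]
      rw [← hp, pow_add]
      ring
    rw [Finset.sum_congr rfl h1, ← Finset.sum_mul, v_conv l hl1 k r s]
  have hwaconv : ∀ r s k,
      (∑ p ∈ antidiagonal k, (wa r p.1 * a s p.2 + a r p.1 * wa s p.2)) = wa (r+s) k := by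
    intro r s k
    have h1 : ∀ p ∈ antidiagonal k, wa r p.1 * a s p.2 + a r p.1 * wa s p.2
        = ((k:ℝ)*tt^k) * (v l r p.1 * v l s p.2) := by
      intro p hp
      rw [HasAntidiagonal.mem_antidiagonal] at hp
      simp only [ha_def, hwa_def]
      rw [← hp, pow_add, Nat.cast_add]
      ring
    rw [Finset.sum_congr rfl h1, ← Finset.mul_sum, v_conv l hl1 k r s]
    simp only [hwa_def]
    ring
  -- partial sums
  set Pa : ℕ → ℕ → ℝ := fun r N => ∑ k ∈ range N, a r k with hPa_def
  set Qa : ℕ → ℕ → ℝ := fun r N => ∑ k ∈ range N, wa r k with hQa_def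
  have hPa0 : ∀ r N, 0 ≤ Pa r N := fun r N => Finset.sum_nonneg fun k _ => ha0 r k
  have hQa0 : ∀ r N, 0 ≤ Qa r N := fun r N => Finset.sum_nonneg fun k _ => hwa0 r k
  have hconvle : ∀ r s N, Pa (r+s) N ≤ Pa r N * Pa s N := by
    intro r s N
    have h1 : Pa (r+s) N = ∑ k ∈ range N, ∑ p ∈ antidiagonal k, a r p.1 * a s p.2 :=
      Finset.sum_congr rfl fun k _ => (haconv r s k).symm
    rw [h1]
    exact sum_conv_le (a r) (a s) (ha0 r) (ha0 s) N
  have hPr : ∀ N r, 1 ≤ r → Pa r N ≤ (Pa 1 N)^r := by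
    intro N r hr
    induction r, hr using Nat.le_induction with
    | base => rw [pow_one]
    | succ r hr ih =>
      calc Pa (r+1) N ≤ Pa r N * Pa 1 N := hconvle r 1 N
        _ ≤ (Pa 1 N)^r * Pa 1 N := mul_le_mul_of_nonneg_right ih (hPa0 1 N)
        _ = (Pa 1 N)^(r+1) := (pow_succ _ _).symm
  have hashift : ∀ k, a 1 (k+1) = tt * a l k := by
    intro k
    simp only [ha_def]
    rw [v_one_succ l k hl1, pow_succ]
    ring
  have hshift : ∀ N, Pa 1 (N+1) = 1 + tt * Pa l N := by
    intro N
    simp only [hPa_def]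
    rw [Finset.sum_range_succ']
    have h1 : ∀ k ∈ range N, a 1 (k+1) = tt * a l k := fun k _ => hashift k
    rw [Finset.sum_congr rfl h1, ← Finset.mul_sum]
    have h2 : a 1 0 = 1 := by simp [ha_def, v_zero]
    rw [h2]
    ring
  have hP1 : ∀ N, Pa 1 N ≤ x₀ := by
    intro N
    induction N with
    | zero =>
      have : Pa 1 0 = 0 := by simp [hPa_def]
      rw [this]
      linarith [hx₀]
    | succ N ih =>
      have h1 : Pa l N ≤ (Pa 1 N)^l := hPr N l hl1
      have h2 : (Pa 1 N)^l ≤ x₀^l := pow_le_pow_left₀ (hPa0 1 N) ih l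
      calc Pa 1 (N+1) = 1 + tt * Pa l N := hshift N
        _ ≤ 1 + tt * x₀^l := by
            have := mul_le_mul_of_nonneg_left (le_trans h1 h2) htt.le
            linarith
        _ = x₀ := halg1
  have hPrx : ∀ N r, 1 ≤ r → Pa r N ≤ x₀^r := by
    intro N r hr
    calc Pa r N ≤ (Pa 1 N)^r := hPr N r hr
      _ ≤ x₀^r := pow_le_pow_left₀ (hPa0 1 N) (hP1 N) r
  have hsums : ∀ r, 1 ≤ r → Summable (a r) := by
    intro r hr
    exact summable_of_sum_range_le (ha0 r) (fun N => hPrx N r hr)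
  have hsum1 : Summable (a 1) := hsums 1 le_rfl
  set B : ℝ := ∑' k, a 1 k with hB_def
  have hB0 : 0 ≤ B := tsum_nonneg (ha0 1)
  have hBx : B ≤ x₀ := Real.tsum_le_of_sum_range_le (ha0 1) hP1
  have hnorm : ∀ r, 1 ≤ r → Summable (fun k => ‖a r k‖) := by
    intro r hr
    have h1 : (fun k => ‖a r k‖) = a r := funext fun k => Real.norm_of_nonneg (ha0 r k)
    rw [h1]
    exact hsums r hr
  have htsum_r : ∀ r, 1 ≤ r → ∑' k, a r k = B^r := by
    intro r hr
    induction r, hr using Nat.le_induction with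
    | base => rw [pow_one]
    | succ r hr ih =>
      have h1 : ∑' k, a (r+1) k = ∑' k, ∑ p ∈ antidiagonal k, a r p.1 * a 1 p.2 :=
        tsum_congr fun k => (haconv r 1 k).symm
      rw [h1, ← tsum_mul_tsum_eq_tsum_sum_antidiagonal_of_summable_norm (hnorm r hr)
          (hnorm 1 le_rfl), ih, ← hB_def, pow_succ]
  have hfix : B = 1 + tt * B^l := by
    have h1 : a 1 0 = 1 := by simp [ha_def, v_zero]
    have h2 : ∑' k, a 1 (k+1) = tt * ∑' k, a l k := by
      rw [← tsum_mul_left]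
      exact tsum_congr fun k => hashift k
    conv_lhs => rw [hB_def, Summable.tsum_eq_zero_add hsum1]
    rw [h1, h2, htsum_r l hl1]
  have hBeq : B = x₀ := by
    have hgeom := geom_sum₂_mul x₀ B l
    have hterm : ∀ i ∈ range l, x₀^i * B^(l-1-i) ≤ x₀^(l-1) := by
      intro i hi
      rw [mem_range] at hi
      calc x₀^i * B^(l-1-i) ≤ x₀^i * x₀^(l-1-i) :=
            mul_le_mul_of_nonneg_left (pow_le_pow_left₀ hB0 hBx _) (by positivity)
        _ = x₀^(l-1) := by rw [← pow_add]; congr 1; omega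
    have hSle : (∑ i ∈ range l, x₀^i * B^(l-1-i)) ≤ (l:ℝ) * x₀^(l-1) := by
      calc (∑ i ∈ range l, x₀^i * B^(l-1-i)) ≤ ∑ _i ∈ range l, x₀^(l-1) :=
            Finset.sum_le_sum hterm
        _ = (l:ℝ) * x₀^(l-1) := by rw [Finset.sum_const, Finset.card_range, nsmul_eq_mul]
    have hS0 : 0 ≤ ∑ i ∈ range l, x₀^i * B^(l-1-i) :=
      Finset.sum_nonneg fun i _ => mul_nonneg (by positivity) (pow_nonneg hB0 _)
    have hdiff : x₀ - B = tt * ((∑ i ∈ range l, x₀^i * B^(l-1-i)) * (x₀ - B)) := by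
      rw [hgeom]
      linarith [halg1, hfix]
    have hd0 : 0 ≤ x₀ - B := by linarith [hBx]
    have h2 : x₀ - B ≤ tt * (((l:ℝ) * x₀^(l-1)) * (x₀ - B)) := by
      rw [hdiff]
      have := mul_le_mul_of_nonneg_right hSle hd0
      nlinarith [htt]
    have h3 : tt * (((l:ℝ) * x₀^(l-1)) * (x₀ - B)) = ((l:ℝ)*ε) * (x₀ - B) := by
      rw [← mul_assoc, halg3]
    rw [h3] at h2
    rcases eq_or_lt_of_le hBx with h | h
    · exact h
    · have hd0' : 0 < x₀ - B := by linarith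
      have h4 : ((l:ℝ)*ε)*(x₀-B) < 1*(x₀-B) := mul_lt_mul_of_pos_right hcap hd0'
      linarith
  -- weighted sums
  have hwconvle : ∀ r s N, Qa (r+s) N ≤ Qa r N * Pa s N + Pa r N * Qa s N := by
    intro r s N
    have h1 : Qa (r+s) N = (∑ k ∈ range N, ∑ p ∈ antidiagonal k, wa r p.1 * a s p.2)
        + ∑ k ∈ range N, ∑ p ∈ antidiagonal k, a r p.1 * wa s p.2 := by
      rw [← Finset.sum_add_distrib]
      refine Finset.sum_congr rfl fun k _ => ?_
      rw [← Finset.sum_add_distrib, hwaconv r s k]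
    rw [h1]
    exact add_le_add (sum_conv_le (wa r) (a s) (hwa0 r) (ha0 s) N)
      (sum_conv_le (a r) (wa s) (ha0 r) (hwa0 s) N)
  have hQr : ∀ N r, 1 ≤ r → Qa r N ≤ (r:ℝ) * x₀^(r-1) * Qa 1 N := by
    intro N r hr
    induction r, hr using Nat.le_induction with
    | base => simp
    | succ r hr ih =>
      have h1 : Qa (r+1) N ≤ Qa r N * Pa 1 N + Pa r N * Qa 1 N := hwconvle r 1 N
      have h2 : Qa r N * Pa 1 N ≤ ((r:ℝ) * x₀^(r-1) * Qa 1 N) * x₀ := by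
        apply mul_le_mul ih (hP1 N) (hPa0 1 N)
        exact mul_nonneg (mul_nonneg (by positivity) (by positivity)) (hQa0 1 N)
      have h3 : Pa r N * Qa 1 N ≤ x₀^r * Qa 1 N :=
        mul_le_mul_of_nonneg_right (hPrx N r hr) (hQa0 1 N)
      have h4 : x₀^(r-1) * x₀ = x₀^r := by rw [← pow_succ]; congr 1; omega
      have : Qa (r+1) N ≤ (r:ℝ) * x₀^(r-1) * Qa 1 N * x₀ + x₀^r * Qa 1 N := by linarith
      calc Qa (r+1) N ≤ (r:ℝ) * x₀^(r-1) * Qa 1 N * x₀ + x₀^r * Qa 1 N := this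
        _ = ((r:ℝ)+1) * x₀^r * Qa 1 N := by rw [← h4]; ring
        _ = ((r+1 : ℕ):ℝ) * x₀^((r+1)-1) * Qa 1 N := by push_cast; norm_num
  have hwashift : ∀ k, wa 1 (k+1) = tt * (wa l k + a l k) := by
    intro k
    simp only [hwa_def, ha_def]
    rw [v_one_succ l k hl1, pow_succ, Nat.cast_add]
    push_cast
    ring
  have hQshift : ∀ N, Qa 1 (N+1) = tt * (Qa l N + Pa l N) := by
    intro N
    simp only [hQa_def, hPa_def]
    rw [Finset.sum_range_succ']
    have h1 : ∀ k ∈ range N, wa 1 (k+1) = tt * (wa l k + a l k) := fun k _ => hwashift k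
    rw [Finset.sum_congr rfl h1]
    have h2 : wa 1 0 = 0 := by simp [hwa_def]
    rw [h2, add_zero, ← Finset.mul_sum, Finset.sum_add_distrib]
  set M : ℝ := tt*x₀^l/(1-(l:ℝ)*ε) with hM_def
  have hM0 : 0 ≤ M := by positivity
  have hQ1 : ∀ N, Qa 1 N ≤ M := by
    intro N
    induction N with
    | zero =>
      have : Qa 1 0 = 0 := by simp [hQa_def]
      rw [this]; exact hM0
    | succ N ih =>
      have h1 : Qa l N ≤ (l:ℝ) * x₀^(l-1) * Qa 1 N := hQr N l hl1
      have h2 : Pa l N ≤ x₀^l := hPrx N l hl1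
      calc Qa 1 (N+1) = tt * (Qa l N + Pa l N) := hQshift N
        _ ≤ tt * ((l:ℝ) * x₀^(l-1) * Qa 1 N + x₀^l) :=
            mul_le_mul_of_nonneg_left (add_le_add h1 h2) htt.le
        _ = ((l:ℝ)*ε) * Qa 1 N + tt * x₀^l := by
            rw [mul_add, ← mul_assoc, ← mul_assoc]
            rw [show tt * (l:ℝ) * x₀^(l-1) = tt * ((l:ℝ) * x₀^(l-1)) from by ring, halg3]
        _ ≤ ((l:ℝ)*ε) * M + tt * x₀^l := by
            have h5 : 0 ≤ (l:ℝ)*ε := by positivity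
            exact add_le_add_left (mul_le_mul_of_nonneg_left ih h5) _
        _ = M := by rw [hM_def]; field_simp; ring
  have hQrx : ∀ N r, 1 ≤ r → Qa r N ≤ (r:ℝ) * x₀^(r-1) * M := by
    intro N r hr
    calc Qa r N ≤ (r:ℝ) * x₀^(r-1) * Qa 1 N := hQr N r hr
      _ ≤ (r:ℝ) * x₀^(r-1) * M := by
          have h5 : (0:ℝ) ≤ (r:ℝ) * x₀^(r-1) := by positivity
          exact mul_le_mul_of_nonneg_left (hQ1 N) h5
  have hsumw : ∀ r, 1 ≤ r → Summable (wa r) := by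
    intro r hr
    exact summable_of_sum_range_le (hwa0 r) (fun N => hQrx N r hr)
  have hsumw1 : Summable (wa 1) := hsumw 1 le_rfl
  have hnormw : ∀ r, 1 ≤ r → Summable (fun k => ‖wa r k‖) := by
    intro r hr
    have h1 : (fun k => ‖wa r k‖) = wa r := funext fun k => Real.norm_of_nonneg (hwa0 r k)
    rw [h1]
    exact hsumw r hr
  set D : ℝ := ∑' k, wa 1 k with hD_def
  have hDr : ∀ r, 1 ≤ r → ∑' k, wa r k = (r:ℝ) * B^(r-1) * D := by
    intro r hr
    induction r, hr using Nat.le_induction with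
    | base => simp [hD_def]
    | succ r hr ih =>
      have h1 : ∑' k, wa (r+1) k
          = ∑' k, ((∑ p ∈ antidiagonal k, wa r p.1 * a 1 p.2)
            + ∑ p ∈ antidiagonal k, a r p.1 * wa 1 p.2) := by
        refine tsum_congr fun k => ?_
        rw [← Finset.sum_add_distrib, hwaconv r 1 k]
      have hs1 : Summable (fun k => ∑ p ∈ antidiagonal k, wa r p.1 * a 1 p.2) :=
        summable_sum_mul_antidiagonal_of_summable_norm' (hnormw r hr) (hsumw r hr) (hnorm 1 le_rfl) hsum1
      have hs2 : Summable (fun k => ∑ p ∈ antidiagonal k, a r p.1 * wa 1 p.2) :=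
        summable_sum_mul_antidiagonal_of_summable_norm' (hnorm r hr) (hsums r hr) (hnormw 1 le_rfl) hsumw1
      rw [h1, Summable.tsum_add hs1 hs2,
          ← tsum_mul_tsum_eq_tsum_sum_antidiagonal_of_summable_norm (hnormw r hr) (hnorm 1 le_rfl),
          ← tsum_mul_tsum_eq_tsum_sum_antidiagonal_of_summable_norm (hnorm r hr) (hnormw 1 le_rfl),
          ih, htsum_r r hr, ← hB_def, ← hD_def]
      have hBr : B^(r-1) * B = B^r := by rw [← pow_succ]; congr 1; omega
      push_cast
      linear_combination ((r:ℝ)*D)*hBr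
  have hDeq : D = tt * ((l:ℝ) * B^(l-1) * D) + tt * B^l := by
    have h1 : wa 1 0 = 0 := by simp [hwa_def]
    have h2 : ∑' k, wa 1 (k+1) = tt * ∑' k, (wa l k + a l k) := by
      rw [← tsum_mul_left]
      exact tsum_congr fun k => hwashift k
    conv_lhs => rw [hD_def, Summable.tsum_eq_zero_add hsumw1]
    rw [h1, h2, Summable.tsum_add (hsumw l hl1) (hsums l hl1), hDr l hl1, htsum_r l hl1]
    ring
  have hDval : D * (1 - (l:ℝ)*ε) = ε * x₀ := by
    have h1 : tt * ((l:ℝ) * B^(l-1)) = (l:ℝ)*ε := by rw [hBeq]; exact halg3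
    have h2 : tt * B^l = ε * x₀ := by rw [hBeq]; exact halg4
    linear_combination hDeq + D*h1 + h2
  -- the main series
  have hgterm : ∀ k, ((l*k).choose k : ℝ) * tt^k = ((l:ℝ)-1) * wa 1 k + a 1 k := by
    intro k
    rw [choose_id l hl1 k]
    simp only [hwa_def, ha_def]
    ring
  have hsumg : Summable (fun k : ℕ => ((l*k).choose k : ℝ) * tt^k) := by
    have h1 : (fun k : ℕ => ((l*k).choose k : ℝ) * tt^k)
        = fun k => ((l:ℝ)-1) * wa 1 k + a 1 k := funext hgterm
    rw [h1]
    exact Summable.add (hsumw1.mul_left _) hsum1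
  have hGval : ∑' k : ℕ, ((l*k).choose k : ℝ) * tt^k = 1/(1-(l:ℝ)*ε) := by
    have h1 : ∑' k : ℕ, ((l*k).choose k : ℝ) * tt^k
        = ((l:ℝ)-1) * D + B := by
      rw [tsum_congr hgterm, Summable.tsum_add (hsumw1.mul_left _) hsum1, tsum_mul_left, ← hD_def, ← hB_def]
    rw [h1, hBeq]
    have hD2 : D = ε * x₀ / (1 - (l:ℝ)*ε) := by
      rw [eq_div_iff (ne_of_gt hlε0)]
      exact hDval
    rw [hD2, hx₀_def]
    field_simp
    ring
  exact ⟨hsumg, hGval⟩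

end BusyAux

/-- Mean of `S⁺` (the busy time with the value on `{S = 0}` replaced by `1`):
`E(S⁺) = P(S=0) + 1·P(S=1) + ∑_{s≥2} s·P(S=s) = (1-ε)^l/(1-lε)`,
where `P(S=0) = (1-ε)^{l-1}`, `P(S=1) = (l-1)ε(1-ε)^{l-1}` and for `s > 1`
`s·P(S=s) = (l-1) ε^s (1-ε)^{s(l-1)} C((s-1)l, s-1)` (sum re-indexed via `s = k+2`). -/
theorem busy_time_plus_mean (l : ℕ) (hl : 2 ≤ l) (ε : ℝ)
    (hε0 : 0 < ε) (hε1 : ε < 1) (hcap : (l : ℝ) * ε < 1) :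
    (1 - ε) ^ (l - 1) + ((l : ℝ) - 1) * ε * (1 - ε) ^ (l - 1)
      + ∑' k : ℕ, ((l : ℝ) - 1) * ε ^ (k + 2) * (1 - ε) ^ ((k + 2) * (l - 1))
          * (Nat.choose ((k + 1) * l) (k + 1) : ℝ)
      = (1 - ε) ^ l / (1 - (l : ℝ) * ε) := by
  obtain ⟨hsumg, hGval⟩ := BusyAux.key l hl ε hε0 hε1 hcap
  have hterm : ∀ k : ℕ, ((l:ℝ)-1) * ε^(k+2) * (1-ε)^((k+2)*(l-1))
        * (Nat.choose ((k+1)*l) (k+1) : ℝ)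
      = (((l:ℝ)-1)*ε*(1-ε)^(l-1))
        * (((l*(k+1)).choose (k+1) : ℝ) * (ε*(1-ε)^(l-1))^(k+1)) := by
    intro k
    have hc : (k+1)*l = l*(k+1) := Nat.mul_comm _ _
    have he : (k+2)*(l-1) = (l-1) + (l-1)*(k+1) := by ring
    rw [hc, he, pow_add (1-ε) (l-1) ((l-1)*(k+1)), pow_mul (1-ε) (l-1) (k+1), mul_pow]
    ring
  rw [tsum_congr hterm, tsum_mul_left]
  have hshift : (∑' k : ℕ, ((l*(k+1)).choose (k+1) : ℝ) * (ε*(1-ε)^(l-1))^(k+1))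
      = (∑' k : ℕ, ((l*k).choose k : ℝ) * (ε*(1-ε)^(l-1))^k) - 1 := by
    have h := Summable.tsum_eq_zero_add hsumg
    have h0 : ((l*0).choose 0 : ℝ) * (ε*(1-ε)^(l-1))^0 = 1 := by simp
    rw [h0] at h
    linarith
  rw [hshift, hGval]
  have hpl : (1-ε)^l = (1-ε)^(l-1) * (1-ε) := by rw [← pow_succ]; congr 1; omega
  have hlε0 : (0:ℝ) < 1-(l:ℝ)*ε := by linarith
  rw [hpl]
  have hne : 1-(l:ℝ)*ε ≠ 0 := ne_of_gt hlε0
  have hI : (1-(l:ℝ)*ε) * (1-(l:ℝ)*ε)⁻¹ = 1 := mul_inv_cancel₀ hne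
  rw [eq_div_iff hne, one_div]
  linear_combination (((l:ℝ)-1)*ε*(1-ε)^(l-1)) * hI
end

section
/- For every integer Q ≥ 2 and every integer k ≥ 1: (Q/(Q+1)) · (1 - 1/Q²)^k ≤ ∏_{j=0}^{k-1} (1 - 1/Q^{k-j}). -/
open Finset

/-! Since `(Q/(Q+1)) (1 - Q⁻²) = 1 - Q⁻¹`, after reindexing the claim reads
`(1 - Q⁻¹) (1 - Q⁻²)^(k-1) ≤ ∏_{i=1}^{k} (1 - Q⁻ⁱ)`, and this holds factor by factor:
`1 - Q⁻ⁱ ≥ 1 - Q⁻²` for `i ≥ 2`. -/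

theorem Finset.prod_range_sub_eq_prod_range_succ {M : Type*} [CommMonoid M] (f : ℕ → M)
    (k : ℕ) :
    ∏ j ∈ range k, f (k - j) = ∏ i ∈ range k, f (i + 1) := by
  rw [← prod_range_reflect]
  refine prod_congr rfl fun j hj => congrArg f ?_
  have := mem_range.mp hj
  omega

section OneSubPow

variable {R : Type*} [CommRing R] [PartialOrder R] [IsStrictOrderedRing R]
  {x : R} (hx₀ : 0 ≤ x) (hx₁ : x ≤ 1)
include hx₀ hx₁

theorem one_sub_sq_pow_le_prod_one_sub_pow (k : ℕ) :
    (1 - x ^ 2) ^ k ≤ ∏ i ∈ range k, (1 - x ^ (i + 2)) := by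
  calc (1 - x ^ 2) ^ k = ∏ _i ∈ range k, (1 - x ^ 2) := by rw [prod_const, card_range]
    _ ≤ ∏ i ∈ range k, (1 - x ^ (i + 2)) :=
        prod_le_prod (fun _ _ => sub_nonneg.mpr (pow_le_one₀ hx₀ hx₁)) fun _ _ =>
          sub_le_sub_left (pow_le_pow_of_le_one hx₀ hx₁ (by omega)) 1

theorem one_sub_mul_one_sub_sq_pow_le_prod (k : ℕ) :
    (1 - x) * (1 - x ^ 2) ^ k ≤ ∏ i ∈ range (k + 1), (1 - x ^ (i + 1)) := by
  rw [prod_range_succ', zero_add, pow_one, mul_comm]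
  exact mul_le_mul_of_nonneg_right (one_sub_sq_pow_le_prod_one_sub_pow hx₀ hx₁ k)
    (sub_nonneg.mpr hx₁)

end OneSubPow

/-- For every integer `Q ≥ 2` and `k ≥ 1`:
`(Q/(Q+1)) (1 - 1/Q²)^k ≤ ∏_{j=0}^{k-1} (1 - 1/Q^{k-j})`. -/
theorem invertible_probability_lower_bound (Q k : ℕ) (hQ : 2 ≤ Q) (hk : 1 ≤ k) :
    ((Q : ℝ) / ((Q : ℝ) + 1)) * (1 - 1 / (Q : ℝ) ^ 2) ^ k
      ≤ ∏ j ∈ Finset.range k, (1 - 1 / (Q : ℝ) ^ (k - j)) := by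
  obtain ⟨m, rfl⟩ := Nat.exists_eq_add_of_le' hk
  have hQ₀ : (0 : ℝ) ≤ (Q : ℝ)⁻¹ := by positivity
  have hQ₁ : (Q : ℝ)⁻¹ ≤ 1 :=
    inv_le_one_of_one_le₀ (by exact_mod_cast (by omega : 1 ≤ Q))
  have h_first : (Q : ℝ) / (Q + 1) * (1 - (Q : ℝ)⁻¹ ^ 2) = 1 - (Q : ℝ)⁻¹ := by
    field_simp
    ring
  simp only [one_div, ← inv_pow]
  calc (Q : ℝ) / (Q + 1) * (1 - (Q : ℝ)⁻¹ ^ 2) ^ (m + 1)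
      = (1 - (Q : ℝ)⁻¹) * (1 - (Q : ℝ)⁻¹ ^ 2) ^ m := by
        rw [pow_succ', ← mul_assoc, h_first]
    _ ≤ ∏ i ∈ range (m + 1), (1 - (Q : ℝ)⁻¹ ^ (i + 1)) :=
        one_sub_mul_one_sub_sq_pow_le_prod hQ₀ hQ₁ m
    _ = ∏ j ∈ range (m + 1), (1 - (Q : ℝ)⁻¹ ^ (m + 1 - j)) :=
        (prod_range_sub_eq_prod_range_succ (fun n => 1 - (Q : ℝ)⁻¹ ^ n) (m + 1)).symm
end

section
/- Let 0 < ε < 1 and l ≥ 2 with lε < 1, and let S have the busy-time distribution P(S=s) = ((l-1)/s) ε^s (1-ε)^{s(l-1)} C((s-1)l, s-1) for s ≥ 1. Let Q ≥ 2, and let ε₀ ∈ (0, ε) satisfy ε₀(1-ε₀)^{l-1} = (1 - 1/Q²) ε(1-ε)^{l-1}. Then ∑_{s=1}^{∞} (1 - (Q/(Q+1))(1 - 1/Q²)^s) · P(S=s) = (Q/(Q+1))(1-ε₀)^{l-1} - (1-ε)^{l-1} + 1/(Q+1). -/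
/-!
Put `y = ε(1-ε)^{l-1}` and `t = 1/(1-ε)`, so that `t = 1 + y t^l`. The numbers
`gould l x n = x/(x+ln) · C(x+ln, n)` are the coefficients of `B(y)^x`, where `B = 1 + y B^l` is
the Fuss–Catalan series, and accordingly satisfy a Vandermonde convolution in `x`. For natural `x`
the terms are nonnegative and the partial sums are bounded by `t^x`; as `l y t^{l-1} = lε < 1`,
`t` is the only solution of `s = 1 + y s^l` in `[0, t]`, whence `B(y) = t`. Convolving the series
for `x = 1 - l` and `x = l - 1` then gives `∑ gould l (1-l) n yⁿ = (1-ε)^{l-1}`, and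
`-gould l (1-l) s = ((l-1)/s) C((s-1)l, s-1)` is the busy-time coefficient. This normalisation
identity, applied at `ε` and at `ε₀` (whose `y` is `1 - 1/Q²` times that of `ε`), gives the theorem.
-/

open Finset Polynomial
open scoped Nat

lemma descPochhammer_succ_eval_left {R : Type*} [CommRing R] (n : ℕ) (r : R) :
    (descPochhammer R (n + 1)).eval r = r * (descPochhammer R n).eval (r - 1) := by
  rw [descPochhammer_succ_left, eval_mul, eval_X, eval_comp, eval_sub, eval_X, eval_one]

/-- `gould l x n = x/(x+ln) · C(x+ln, n)`, written as a polynomial in `x`. -/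
noncomputable def gould (l : ℕ) (x : ℝ) : ℕ → ℝ
  | 0 => 1
  | n + 1 => x * (descPochhammer ℝ n).eval (x + l * (n + 1) - 1) / (n + 1)!

section Gould

variable {l : ℕ}

@[simp] lemma gould_zero (x : ℝ) : gould l x 0 = 1 := rfl

lemma gould_zero_succ (n : ℕ) : gould l 0 (n + 1) = 0 := by simp [gould]

lemma gould_succ_eq_choose {x : ℝ} {n m : ℕ} (hm : x + l * (n + 1) - 1 = m) :
    gould l x (n + 1) = x / (n + 1) * m.choose n := by
  rw [gould, hm, Nat.cast_choose_eq_descPochhammer_div, Nat.factorial_succ]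
  push_cast
  field_simp

lemma gould_nonneg (hl : 1 ≤ l) {x : ℝ} (hx : 0 ≤ x) (n : ℕ) : 0 ≤ gould l x n := by
  cases n with
  | zero => simp
  | succ n =>
    have hl' : (1 : ℝ) ≤ l := by exact_mod_cast hl
    have : (n : ℝ) - 1 ≤ x + l * (n + 1) - 1 := by nlinarith
    exact div_nonneg (mul_nonneg hx (descPochhammer_nonneg this)) (by positivity)

lemma abs_gould_neg_le (hl : 1 ≤ l) {x : ℝ} (hx : 0 ≤ x) (hxl : x ≤ l) (n : ℕ) :
    |gould l (-x) n| ≤ gould l x n := by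
  cases n with
  | zero => simp
  | succ n =>
    have hl' : (1 : ℝ) ≤ l := by exact_mod_cast hl
    have hlow : (n : ℝ) - 1 ≤ -x + l * (n + 1) - 1 := by nlinarith
    have hup : -x + l * (n + 1) - 1 ≤ x + l * (n + 1) - 1 := by linarith
    have hmono := monotoneOn_descPochhammer_eval n hlow (hlow.trans hup) hup
    rw [gould, gould, abs_div, abs_mul, abs_neg, abs_of_nonneg hx,
      abs_of_nonneg (descPochhammer_nonneg hlow), abs_of_pos (by positivity)]
    gcongr

lemma gould_add_one_succ (x : ℝ) (n : ℕ) :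
    gould l (x + 1) (n + 1) = gould l x (n + 1) + gould l (x + l) n := by
  cases n with
  | zero => simp [gould]
  | succ m =>
    set r : ℝ := x + l * (m + 2) - 1
    have hr : (descPochhammer ℝ (m + 1)).eval (r + 1) = (r + 1) * (descPochhammer ℝ m).eval r := by
      rw [descPochhammer_succ_eval_left, add_sub_cancel_right]
    simp only [gould, Nat.factorial_succ (m + 1)]
    push_cast
    rw [show x + 1 + l * (m + 1 + 1) - 1 = r + 1 by ring, show x + l * (m + 1 + 1) - 1 = r by ring,
      show x + l + l * (m + 1) - 1 = r by ring, hr, descPochhammer_succ_eval]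
    field_simp
    ring

lemma gould_add (n : ℕ) (x : ℤ) (y : ℝ) :
    gould l (x + y) n = ∑ p ∈ antidiagonal n, gould l x p.1 * gould l y p.2 := by
  induction n generalizing x y with
  | zero => simp
  | succ n ih =>
    set D : ℤ → ℝ := fun x ↦
      ∑ p ∈ antidiagonal (n + 1), gould l x p.1 * gould l y p.2 - gould l (x + y) (n + 1)
    have hD0 : D 0 = 0 := by
      simp [D, Nat.sum_antidiagonal_succ, gould_zero_succ]
    have hD : ∀ x : ℤ, D (x + 1) = D x := by
      intro x
      have hx := ih (x + l) y
      simp only [D, Nat.sum_antidiagonal_succ, Int.cast_add, Int.cast_one, Int.cast_natCast,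
        gould_add_one_succ, add_mul, sum_add_distrib, gould_zero] at hx ⊢
      rw [show (x : ℝ) + 1 + y = x + y + 1 by ring, gould_add_one_succ,
        show (x : ℝ) + y + l = x + l + y by ring, hx]
      ring
    have : ∀ x : ℤ, D x = 0 := by
      intro x
      induction x using Int.induction_on with
      | zero => exact hD0
      | succ k hk => rw [hD, hk]
      | pred k hk => rw [← hD, sub_add_cancel, hk]
    exact (sub_eq_zero.mp (this x)).symm

end Gould

lemma tsum_mul_tsum_eq_tsum_antidiagonal_mul_pow {a b : ℕ → ℝ} {y : ℝ}
    (ha : Summable fun n ↦ ‖a n * y ^ n‖) (hb : Summable fun n ↦ ‖b n * y ^ n‖) :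
    (∑' n, a n * y ^ n) * (∑' n, b n * y ^ n)
      = ∑' n, (∑ p ∈ antidiagonal n, a p.1 * b p.2) * y ^ n := by
  rw [tsum_mul_tsum_eq_tsum_sum_antidiagonal_of_summable_norm ha hb]
  refine tsum_congr fun n ↦ ?_
  rw [sum_mul]
  refine sum_congr rfl fun p hp ↦ ?_
  rw [← mem_antidiagonal.mp hp, pow_add]
  ring

lemma eq_of_le_of_eq_one_add_mul_pow {l : ℕ} {y s t : ℝ} (hy : 0 ≤ y) (hs0 : 0 ≤ s) (hst : s ≤ t)
    (hs : s = 1 + y * s ^ l) (ht : t = 1 + y * t ^ l) (hlt : l * y * t ^ (l - 1) < 1) :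
    s = t := by
  have ht0 : 0 ≤ t := hs0.trans hst
  have hpow : t ^ l - s ^ l ≤ (t - s) * l * t ^ (l - 1) := by
    have h := abs_pow_sub_pow_le t s l
    rwa [abs_of_nonneg ht0, abs_of_nonneg hs0, max_eq_left hst,
      abs_of_nonneg (sub_nonneg.mpr hst),
      abs_of_nonneg (sub_nonneg.mpr (pow_le_pow_left₀ hs0 hst l))] at h
  have : t - s ≤ l * y * t ^ (l - 1) * (t - s) := by
    calc t - s = y * (t ^ l - s ^ l) := by linear_combination ht - hs
      _ ≤ y * ((t - s) * l * t ^ (l - 1)) := mul_le_mul_of_nonneg_left hpow hy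
      _ = l * y * t ^ (l - 1) * (t - s) := by ring
  nlinarith

section GeneratingFunction

variable {l : ℕ} {y t : ℝ}

lemma tsum_gould_zero_mul_pow : ∑' n, gould l 0 n * y ^ n = 1 := by
  rw [tsum_eq_single 0 fun n hn ↦ ?_, gould_zero, pow_zero, one_mul]
  obtain ⟨m, rfl⟩ := Nat.exists_eq_succ_of_ne_zero hn
  rw [gould_zero_succ, zero_mul]

lemma sum_range_succ_gould_add_one (x : ℝ) (N : ℕ) :
    ∑ n ∈ range (N + 1), gould l (x + 1) n * y ^ n
      = ∑ n ∈ range (N + 1), gould l x n * y ^ n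
        + y * ∑ n ∈ range N, gould l (x + l) n * y ^ n := by
  have hshift : ∀ n, gould l (x + l) n * y ^ (n + 1) = y * (gould l (x + l) n * y ^ n) :=
    fun n ↦ by ring
  simp only [sum_range_succ' _ N, gould_add_one_succ, add_mul, sum_add_distrib, hshift, mul_sum,
    gould_zero]
  ring

lemma sum_range_gould_mul_pow_le (hy : 0 ≤ y) (ht0 : 0 ≤ t) (ht : 1 + y * t ^ l ≤ t) (N k : ℕ) :
    ∑ n ∈ range N, gould l k n * y ^ n ≤ t ^ k := by
  induction N generalizing k with
  | zero => simp [ht0]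
  | succ N ih =>
    induction k with
    | zero => simp [sum_range_succ', gould_zero_succ]
    | succ k ihk =>
      push_cast
      rw [sum_range_succ_gould_add_one]
      calc _ ≤ t ^ k + y * t ^ (k + l) := by
            gcongr
            exact_mod_cast ih (k + l)
        _ = t ^ k * (1 + y * t ^ l) := by ring
        _ ≤ t ^ (k + 1) := by rw [pow_succ]; gcongr

lemma summable_gould_mul_pow (hl : 1 ≤ l) (hy : 0 ≤ y) (ht0 : 0 ≤ t) (ht : 1 + y * t ^ l ≤ t)
    (k : ℕ) : Summable fun n ↦ gould l k n * y ^ n :=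
  summable_of_sum_range_le (fun n ↦ mul_nonneg (gould_nonneg hl k.cast_nonneg n) (pow_nonneg hy n))
    (sum_range_gould_mul_pow_le hy ht0 ht · k)

lemma tsum_gould_one_mul_pow (hl : 1 ≤ l) (hy : 0 ≤ y) (ht0 : 0 ≤ t) (ht : 1 + y * t ^ l ≤ t) :
    ∑' n, gould l 1 n * y ^ n = 1 + y * ∑' n, gould l l n * y ^ n := by
  have hshift : ∀ n, gould l 1 (n + 1) * y ^ (n + 1) = y * (gould l l n * y ^ n) := fun n ↦ by
    rw [← zero_add (1 : ℝ), gould_add_one_succ, gould_zero_succ, zero_add, zero_add, pow_succ]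
    ring
  have h1 := summable_gould_mul_pow hl hy ht0 ht 1
  rw [Nat.cast_one] at h1
  rw [h1.tsum_eq_zero_add, tsum_congr hshift, tsum_mul_left, gould_zero, pow_zero, one_mul]

lemma tsum_gould_natCast_mul_pow (hl : 1 ≤ l) (hy : 0 ≤ y) (ht0 : 0 ≤ t)
    (ht : 1 + y * t ^ l ≤ t) (k : ℕ) :
    ∑' n, gould l k n * y ^ n = (∑' n, gould l 1 n * y ^ n) ^ k := by
  have hnorm (k : ℕ) : Summable fun n ↦ ‖gould l k n * y ^ n‖ :=
    summable_norm_iff.mpr (summable_gould_mul_pow hl hy ht0 ht k)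
  induction k with
  | zero => simpa using tsum_gould_zero_mul_pow
  | succ k ih =>
    have h1 := hnorm 1
    rw [Nat.cast_one] at h1
    rw [pow_succ, ← ih, tsum_mul_tsum_eq_tsum_antidiagonal_mul_pow (hnorm k) h1]
    refine tsum_congr fun n ↦ ?_
    rw [← Int.cast_natCast k, ← gould_add]
    push_cast
    rfl

lemma hasSum_gould_natCast_mul_pow (hl : 1 ≤ l) (hy : 0 ≤ y) (ht0 : 0 ≤ t)
    (ht : 1 + y * t ^ l = t) (hlt : l * y * t ^ (l - 1) < 1) (k : ℕ) :
    HasSum (fun n ↦ gould l k n * y ^ n) (t ^ k) := by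
  have hle := ht.le
  have hnonneg (n : ℕ) : 0 ≤ gould l 1 n * y ^ n :=
    mul_nonneg (gould_nonneg hl zero_le_one n) (pow_nonneg hy n)
  have hs : ∑' n, gould l 1 n * y ^ n = t := by
    refine eq_of_le_of_eq_one_add_mul_pow hy (tsum_nonneg hnonneg) ?_ ?_ ht.symm hlt
    · simpa using Real.tsum_le_of_sum_range_le hnonneg
        (by simpa using sum_range_gould_mul_pow_le hy ht0 hle · 1)
    · rw [← tsum_gould_natCast_mul_pow hl hy ht0 hle l]
      exact tsum_gould_one_mul_pow hl hy ht0 hle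
  rw [← hs, ← tsum_gould_natCast_mul_pow hl hy ht0 hle k]
  exact (summable_gould_mul_pow hl hy ht0 hle k).hasSum

lemma hasSum_gould_one_sub_mul_pow (hl : 1 ≤ l) (hy : 0 ≤ y) (ht0 : 0 ≤ t)
    (ht : 1 + y * t ^ l = t) (hlt : l * y * t ^ (l - 1) < 1) :
    HasSum (fun n ↦ gould l (1 - l) n * y ^ n) (t ^ (l - 1))⁻¹ := by
  have hk : ((l - 1 : ℕ) : ℝ) = l - 1 := by rw [Nat.cast_sub hl, Nat.cast_one]
  have hg := hasSum_gould_natCast_mul_pow hl hy ht0 ht hlt (l - 1)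
  have hbound (n : ℕ) : ‖gould l (1 - l) n * y ^ n‖ ≤ gould l (l - 1 : ℕ) n * y ^ n := by
    rw [norm_mul, norm_pow, Real.norm_of_nonneg hy, Real.norm_eq_abs,
      show (1 : ℝ) - l = -((l - 1 : ℕ) : ℝ) by rw [hk]; ring]
    gcongr
    exact abs_gould_neg_le hl (Nat.cast_nonneg _) (by rw [hk]; linarith) n
  have hf : Summable fun n ↦ ‖gould l (1 - l) n * y ^ n‖ :=
    hg.summable.of_nonneg_of_le (fun _ ↦ norm_nonneg _) hbound
  have hprod : (∑' n, gould l (1 - l) n * y ^ n) * t ^ (l - 1) = 1 := by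
    rw [← hg.tsum_eq, tsum_mul_tsum_eq_tsum_antidiagonal_mul_pow hf
      (summable_norm_iff.mpr hg.summable)]
    refine (tsum_congr fun n ↦ ?_).trans (tsum_gould_zero_mul_pow (l := l) (y := y))
    rw [show (1 : ℝ) - l = ((1 - l : ℤ) : ℝ) by push_cast; ring, ← gould_add, hk,
      show ((1 - l : ℤ) : ℝ) + (l - 1) = 0 by push_cast; ring]
  rw [← eq_inv_of_mul_eq_one_left hprod]
  exact hf.of_norm.hasSum

end GeneratingFunction

lemma hasSum_gould_one_sub_mul_pow_of_mul_lt_one {l : ℕ} {ε : ℝ} (hl : 1 ≤ l) (hε0 : 0 ≤ ε)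
    (hlε : l * ε < 1) :
    HasSum (fun n ↦ gould l (1 - l) n * (ε * (1 - ε) ^ (l - 1)) ^ n) ((1 - ε) ^ (l - 1)) := by
  obtain ⟨k, rfl⟩ := Nat.exists_eq_add_of_le' hl
  push_cast at hlε ⊢
  have hu : 0 < 1 - ε := by nlinarith
  have hyt : ε * (1 - ε) ^ k * (1 - ε)⁻¹ ^ k = ε := by
    rw [inv_pow, mul_inv_cancel_right₀ (pow_ne_zero k hu.ne')]
  have ht : 1 + ε * (1 - ε) ^ k * (1 - ε)⁻¹ ^ (k + 1) = (1 - ε)⁻¹ := by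
    rw [pow_succ, ← mul_assoc, hyt]
    field_simp
    ring
  have h := hasSum_gould_one_sub_mul_pow (l := k + 1) (y := ε * (1 - ε) ^ k) (t := (1 - ε)⁻¹)
    hl (by positivity) (by positivity) (by exact_mod_cast ht)
    (by rw [Nat.add_sub_cancel, mul_assoc, hyt]; push_cast; exact hlε)
  push_cast at h
  rwa [inv_pow, inv_inv] at h

lemma hasSum_sub_one_div_mul_choose_mul_pow {l : ℕ} {ε : ℝ} (hl : 1 ≤ l) (hε0 : 0 ≤ ε)
    (hlε : l * ε < 1) :
    HasSum (fun k : ℕ ↦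
        ((l : ℝ) - 1) / (k + 1) * (k * l).choose k * (ε * (1 - ε) ^ (l - 1)) ^ (k + 1))
      (1 - (1 - ε) ^ (l - 1)) := by
  have h := ((hasSum_nat_add_iff' 1).mpr
    (hasSum_gould_one_sub_mul_pow_of_mul_lt_one hl hε0 hlε)).neg
  rw [sum_range_one, gould_zero, pow_zero, mul_one, neg_sub] at h
  refine h.congr_fun fun k ↦ ?_
  rw [gould_succ_eq_choose (m := k * l) (by push_cast; ring)]
  ring

theorem decoding_failure_series_general (l Q : ℕ) (hl : 2 ≤ l)
    (ε ε₀ : ℝ) (hε0 : 0 < ε) (hcap : (l : ℝ) * ε < 1)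
    (h0 : 0 < ε₀) (h1 : ε₀ < ε)
    (heq : ε₀ * (1 - ε₀) ^ (l - 1)
      = (1 - 1 / (Q : ℝ) ^ 2) * (ε * (1 - ε) ^ (l - 1))) :
    ∑' k : ℕ, (1 - ((Q : ℝ) / ((Q : ℝ) + 1)) * (1 - 1 / (Q : ℝ) ^ 2) ^ (k + 1)) *
        (((l : ℝ) - 1) / ((k : ℝ) + 1) * ε ^ (k + 1)
          * (1 - ε) ^ ((k + 1) * (l - 1)) * (Nat.choose (k * l) k : ℝ))
      = ((Q : ℝ) / ((Q : ℝ) + 1)) * (1 - ε₀) ^ (l - 1)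
        - (1 - ε) ^ (l - 1) + 1 / ((Q : ℝ) + 1) := by
  have hl1 : 1 ≤ l := by omega
  have hcap₀ : (l : ℝ) * ε₀ < 1 := (mul_le_mul_of_nonneg_left h1.le l.cast_nonneg).trans_lt hcap
  have hS := hasSum_sub_one_div_mul_choose_mul_pow hl1 hε0.le hcap
  have hS₀ := hasSum_sub_one_div_mul_choose_mul_pow hl1 h0.le hcap₀
  rw [heq] at hS₀
  refine ((hS.sub (hS₀.mul_left ((Q : ℝ) / (Q + 1)))).congr_fun fun k ↦ ?_).tsum_eq.trans ?_
  · rw [mul_pow _ (ε * _), mul_pow ε, ← pow_mul, mul_comm (l - 1)]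
    ring
  · field_simp
    ring

/-- Decoding-failure series: with busy-time pmf
`P(S=s) = ((l-1)/s) ε^s (1-ε)^{s(l-1)} C((s-1)l, s-1)` for `s ≥ 1`,
field size `Q ≥ 2`, and `ε₀ ∈ (0, ε)` satisfying
`ε₀(1-ε₀)^{l-1} = (1 - 1/Q²) ε(1-ε)^{l-1}`, one has
`∑_{s≥1} (1 - (Q/(Q+1))(1 - 1/Q²)^s) P(S=s)
  = (Q/(Q+1))(1-ε₀)^{l-1} - (1-ε)^{l-1} + 1/(Q+1)`
(sum re-indexed via `s = k+1`). -/
theorem decoding_failure_series (l Q : ℕ) (hl : 2 ≤ l) (hQ : 2 ≤ Q)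
    (ε ε₀ : ℝ) (hε0 : 0 < ε) (hε1 : ε < 1) (hcap : (l : ℝ) * ε < 1)
    (h0 : 0 < ε₀) (h1 : ε₀ < ε)
    (heq : ε₀ * (1 - ε₀) ^ (l - 1)
      = (1 - 1 / (Q : ℝ) ^ 2) * (ε * (1 - ε) ^ (l - 1))) :
    ∑' k : ℕ, (1 - ((Q : ℝ) / ((Q : ℝ) + 1)) * (1 - 1 / (Q : ℝ) ^ 2) ^ (k + 1)) *
        (((l : ℝ) - 1) / ((k : ℝ) + 1) * ε ^ (k + 1)
          * (1 - ε) ^ ((k + 1) * (l - 1)) * (Nat.choose (k * l) k : ℝ))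
      = ((Q : ℝ) / ((Q : ℝ) + 1)) * (1 - ε₀) ^ (l - 1)
        - (1 - ε) ^ (l - 1) + 1 / ((Q : ℝ) + 1) :=
  decoding_failure_series_general l Q hl ε ε₀ hε0 hcap h0 h1 heq
end
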